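/- arXiv:1605.03785 — 11 statements merged into one kernel-verified Lean document; each statement's English description precedes it below -/
import Mathlib

section
/- For any integers n and k with 3 ≤ k ≤ ⌊n/2⌋ − 2, every string v ∈ V_n^(k) is bifix-free, i.e., no nonempty proper prefix of v equals a proper suffix of v. -/
/-!
Binary strings are modeled as `List Bool`, with `true` = 1 and `false` = 0.
-/

/-- A string `v` is bifix-free if no nonempty proper prefix of `v` equals a
(proper) suffix of `v`. -/
def BifixFree (v : List Bool) : Prop :=
  ∀ p : List Bool, p ≠ [] → p ≠ v → p <+: v → ¬ p <:+ v

/-- The set `V_n^(k)`: binary strings of length `n` starting with `k` ones,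
ending with `k` zeros, whose middle factor `v_{k+1} … v_{n-k}` begins with 0,
ends with 1, and contains neither `k` consecutive 0's nor `k` consecutive 1's. -/
def Vnk (n k : ℕ) : Set (List Bool) :=
  {v | v.length = n ∧
    List.replicate k true <+: v ∧
    List.replicate k false <:+ v ∧
    ((v.drop k).take (n - 2 * k)).head? = some false ∧
    ((v.drop k).take (n - 2 * k)).getLast? = some true ∧
    ¬ List.replicate k false <:+: ((v.drop k).take (n - 2 * k)) ∧
    ¬ List.replicate k true <:+: ((v.drop k).take (n - 2 * k))}

/-- `𝒱^(k) = ⋃_{i ≥ 2k+2} V_i^(k)`. -/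
def VkSet (k : ℕ) : Set (List Bool) := ⋃ i ∈ {i : ℕ | 2 * k + 2 ≤ i}, Vnk i k

/-- `𝒱^(k)(n)`: elements of `𝒱^(k)` of length at most `n`. -/
def VkLe (k n : ℕ) : Set (List Bool) := {v ∈ VkSet k | v.length ≤ n}

/-- The set of binary strings of length `ℓ` that begin with 0, end with 1, and
contain neither `k` consecutive 0's nor `k` consecutive 1's. -/
def Rset (k ℓ : ℕ) : Set (List Bool) :=
  {w | w.length = ℓ ∧ w.head? = some false ∧ w.getLast? = some true ∧
    ¬ List.replicate k false <:+: w ∧ ¬ List.replicate k true <:+: w}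

/-- `r_ℓ^(k)`, with the convention `r_0^(k) = 1`. -/
noncomputable def r (k ℓ : ℕ) : ℕ := if ℓ = 0 then 1 else (Rset k ℓ).ncard

/-- Shifted `k`-generalized Fibonacci numbers: `f_ℓ^(k) = 2^ℓ` for `ℓ ≤ k-1`, and
`f_ℓ^(k) = ∑_{i=1}^{k} f_{ℓ-i}^(k)` for `ℓ ≥ k`. -/
def f (k : ℕ) : ℕ → ℕ
  | ℓ =>
    if h : ℓ < k then 2 ^ ℓ
    else ∑ i ∈ (Finset.range k).attach, f k (ℓ - (i.1 + 1))
termination_by ℓ => ℓ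
decreasing_by
  have hi := i.2
  simp only [Finset.mem_range] at hi
  omega

/-- `S^(k)(n) = ∑_{ℓ=0}^{n} f_ℓ^(k)`. -/
def S (k n : ℕ) : ℕ := ∑ ℓ ∈ Finset.range (n + 1), f k ℓ

/-- `d_ℓ^(k)`: 1 if `ℓ ≡ 0 (mod k)`, -1 if `ℓ ≡ 1 (mod k)`, 0 otherwise. -/
def d (k ℓ : ℕ) : ℤ := if ℓ % k = 0 then 1 else if ℓ % k = 1 then -1 else 0

/-- A set of binary strings is a cross-fix-free code if every element is
bifix-free and, for any two distinct elements `v, v'`, no nonempty prefix of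
`v` (including `v` itself) is a suffix of `v'`, and vice versa. -/
def CrossFixFree (X : Set (List Bool)) : Prop :=
  (∀ v ∈ X, BifixFree v) ∧
  ∀ v ∈ X, ∀ v' ∈ X, v ≠ v' → ∀ p : List Bool, p ≠ [] → p <+: v → ¬ p <:+ v'

/-- A strong cross-fix-free code: cross-fix-free and no codeword is a factor of
another. -/
def StrongCrossFixFree (X : Set (List Bool)) : Prop :=
  CrossFixFree X ∧ ∀ v ∈ X, ∀ v' ∈ X, v ≠ v' → ¬ v <:+: v'

/-- A Dyck word: equal numbers of 1's and 0's, and every prefix has at least as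
many 1's as 0's. -/
def IsDyck (w : List Bool) : Prop :=
  w.count true = w.count false ∧ ∀ p : List Bool, p <+: w → p.count false ≤ p.count true

/-- `𝒟 = { 1α0 : α a Dyck word }`. -/
def Dset : Set (List Bool) := {v | ∃ α : List Bool, IsDyck α ∧ v = true :: (α ++ [false])}

/-- `𝒟(n)`: elements of `𝒟` of length at most `n`. -/
def DLe (n : ℕ) : Set (List Bool) := {v ∈ Dset | v.length ≤ n}

/-- For any integers `n`, `k` with `3 ≤ k ≤ ⌊n/2⌋ - 2`, every
string in `V_n^(k)` is bifix-free. -/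
theorem stmt_0 (n k : ℕ) (hk : 3 ≤ k) (hkn : k ≤ n / 2 - 2) :
    ∀ v ∈ Vnk n k, BifixFree v := by
  intro v hv
  obtain ⟨hlen, hpre, hsuf, hhead, hlast, hF0, hF1⟩ := hv
  have hn : 2 * k + 4 ≤ n := by omega
  set m : List Bool := (v.drop k).take (n - 2 * k) with hm
  have hmlen : m.length = n - 2 * k := by
    rw [hm]; simp [hlen]; omega
  -- structural decomposition
  obtain ⟨t, ht⟩ := hpre
  obtain ⟨s, hs⟩ := hsuf
  have htlen : t.length = n - k := by
    have := congrArg List.length ht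
    simp [hlen] at this; omega
  have hslen : s.length = n - k := by
    have := congrArg List.length hs
    simp [hlen] at this; omega
  have hdropk : v.drop k = t := by
    rw [← ht]; simp
  have hdropnk : v.drop (n - k) = List.replicate k false := by
    rw [← hs, List.drop_append]
    simp [hslen]
  have htail : t.drop (n - 2 * k) = List.replicate k false := by
    rw [← hdropk, List.drop_drop, ← hdropnk]
    congr 1; omega
  have hteq : t = m ++ List.replicate k false := by
    rw [hm, hdropk, ← htail, List.take_append_drop]
  have hveq : v = List.replicate k true ++ (m ++ List.replicate k false) := by
    rw [← hteq, ht]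
  -- getElem? facts
  have hT : ∀ i, i < k → v[i]? = some true := by
    intro i hi
    rw [hveq, List.getElem?_append_left (by simp; omega), List.getElem?_replicate,
      if_pos hi]
  have hM : ∀ i, i < m.length → v[k + i]? = m[i]? := by
    intro i hi
    rw [hveq, List.getElem?_append_right (by simp)]
    simp [List.getElem?_append_left hi]
  have hF : ∀ i, n - k ≤ i → i < n → v[i]? = some false := by
    intro i h1 h2
    rw [hveq, List.getElem?_append_right (by simp; omega),
      List.getElem?_append_right (by simp [hmlen]; omega), List.getElem?_replicate,
      if_pos (by simp [hmlen]; omega)]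
  have hvk : v[k]? = some false := by
    have := hM 0 (by omega)
    rw [← List.head?_eq_getElem?, hhead] at this
    simpa using this
  -- the bifix hypothesis
  intro p hpne hpnv hppre hpsuf
  set ℓ := p.length with hℓ
  have hℓn : ℓ ≤ n := by
    have := hppre.length_le; omega
  have hℓlt : ℓ < n := by
    rcases Nat.lt_or_ge ℓ n with h | h
    · exact h
    · exact absurd (hppre.eq_of_length (by omega)) hpnv
  have hℓpos : 0 < ℓ := List.length_pos_iff.mpr hpne
  rcases Nat.lt_or_ge ℓ (k + 1) with hcase | hcase
  · -- short case: p is all true and all false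
    have h1 : p <+: List.replicate k true := by
      refine List.prefix_of_prefix_length_le hppre ⟨t, ht⟩ (by simp; omega)
    have h2 : p <:+ List.replicate k false := by
      refine List.suffix_of_suffix_length_le hpsuf ⟨s, hs⟩ (by simp; omega)
    obtain ⟨a, ha⟩ := List.exists_mem_of_ne_nil p hpne
    have ha1 : a = true := List.eq_of_mem_replicate (h1.subset ha)
    have ha2 : a = false := List.eq_of_mem_replicate (h2.subset ha)
    simp [ha1] at ha2
  · -- long case
    obtain ⟨q, hq⟩ := hppre
    obtain ⟨u, hu⟩ := hpsuf
    have hulen : u.length = n - ℓ := by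
      have := congrArg List.length hu
      simp [hlen] at this; omega
    set j := n - ℓ with hj
    have hshift : ∀ i, i < ℓ → v[j + i]? = v[i]? := by
      intro i hi
      conv_lhs => rw [← hu]
      conv_rhs => rw [← hq]
      rw [List.getElem?_append_right (by omega), List.getElem?_append_left hi]
      congr 1; omega
    have hblock : ∀ i, i < k → v[j + i]? = some true := by
      intro i hi
      rw [hshift i (by omega), hT i hi]
    have hj1 : 1 ≤ j := by omega
    rcases Nat.lt_or_ge j k with hjk | hjk
    · -- block covers position k, contradiction with v[k] = false
      have := hblock (k - j) (by omega)
      rw [show j + (k - j) = k by omega, hvk] at this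
      simp at this
    · -- block fully inside m
      have hjle : j ≤ n - 2 * k := by
        by_contra h
        have h1 := hblock (k - 1) (by omega)
        have h2 := hF (j + (k - 1)) (by omega) (by omega)
        rw [h2] at h1; simp at h1
      have hw : (m.drop (j - k)).take k = List.replicate k true := by
        apply List.ext_getElem?
        intro i
        rw [List.getElem?_take, List.getElem?_replicate]
        by_cases hik : i < k
        · rw [if_pos hik, if_pos hik, List.getElem?_drop, ← hM _ (by omega),
            show k + (j - k + i) = j + i by omega, hblock i hik]
        · rw [if_neg hik, if_neg hik]
      have : List.replicate k true <:+: m := by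
        rw [← hw]
        exact ((List.take_prefix _ _).isInfix).trans ((List.drop_suffix _ _).isInfix)
      exact hF1 this
end

section
/- For any integers n and k with 3 ≤ k ≤ ⌊n/2⌋ − 2, the set V_n^(k) is a cross-bifix-free code: for any two strings v, v' ∈ V_n^(k) (not necessarily distinct), no nonempty proper prefix of v equals a nonempty proper suffix of v'. -/
lemma infix_of_getElem? (l : List Bool) (j k : ℕ) (hjk : j + k ≤ l.length)
    (h : ∀ i, i < k → l[j+i]? = some true) :
    List.replicate k true <:+: l := by
  have heq : List.replicate k true = (l.drop j).take k := by
    apply List.ext_getElem?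
    intro i
    rw [List.getElem?_replicate, List.getElem?_take, List.getElem?_drop]
    by_cases hi : i < k
    · simp [hi, h i hi]
    · simp [hi]
  rw [heq]
  exact ((List.take_prefix k _).isInfix).trans (List.drop_suffix j l).isInfix

/-- `V_n^(k)` is a cross-bifix-free code: for any `v, v' ∈ V_n^(k)`,
no nonempty proper prefix of `v` equals a nonempty proper suffix of `v'`. -/
theorem stmt_1 (n k : ℕ) (hk : 3 ≤ k) (hkn : k ≤ n / 2 - 2) :
    ∀ v ∈ Vnk n k, ∀ v' ∈ Vnk n k, ∀ p : List Bool,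
      p ≠ [] → p <+: v → p ≠ v → ¬ (p <:+ v' ∧ p ≠ v') := by
  have hn : 2 * k + 4 ≤ n := by omega
  rintro v ⟨hvlen, hvpre, _, _, _, _, _⟩ v' ⟨hlen, hpre, hsuf, hhead, _, _, hnoT⟩
    p hpne hppre _ ⟨hpsuf, hpnev⟩
  set ℓ := p.length with hℓ
  have hℓpos : 1 ≤ ℓ := by
    cases p with
    | nil => exact absurd rfl hpne
    | cons a t => simp [hℓ]
  have hℓlt : ℓ < n := by
    have hle := hpsuf.length_le
    rw [hlen] at hle
    rcases lt_or_eq_of_le hle with h | h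
    · exact h
    · exact absurd (hpsuf.eq_of_length (by omega)) hpnev
  -- values of v
  have hvtrue : ∀ i, i < k → v[i]? = some true := by
    obtain ⟨q, rfl⟩ := hvpre
    intro i hi
    rw [List.getElem?_append, if_pos (by simp [hi]), List.getElem?_replicate, if_pos hi]
  -- values of v'
  have hv'zero : ∀ i, n - k ≤ i → i < n → v'[i]? = some false := by
    obtain ⟨s, hs⟩ := hsuf
    have hslen : s.length = n - k := by
      have := congrArg List.length hs
      simp [hlen] at this
      omega
    intro i h1 h2
    rw [← hs, List.getElem?_append_right (by omega), List.getElem?_replicate,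
      if_pos (by omega)]
  have hmid : ∀ i, ((v'.drop k).take (n - 2 * k))[i]? =
      if i < n - 2 * k then v'[k + i]? else none := by
    intro i
    rw [List.getElem?_take, List.getElem?_drop]
  have hmk : v'[k]? = some false := by
    have h0 := hhead
    rw [List.head?_eq_getElem?, hmid 0, if_pos (by omega)] at h0
    simpa using h0
  -- p values
  have hp : ∀ i, i < ℓ → p[i]? = v'[n - ℓ + i]? := by
    obtain ⟨t, ht⟩ := hpsuf
    have htlen : t.length = n - ℓ := by
      have := congrArg List.length ht
      simp [hlen, ← hℓ] at this
      omega
    intro i hi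
    rw [← ht, List.getElem?_append_right (by omega) (l₁ := t)]
    · rw [htlen, show n - ℓ + i - (n - ℓ) = i by omega]
  have hppt : ∀ i, i < ℓ → p[i]? = v[i]? := by
    obtain ⟨q, rfl⟩ := hppre
    intro i hi
    rw [List.getElem?_append, if_pos (by omega)]
  rcases le_or_gt ℓ k with hcase | hcase
  · -- p is all true, but its last element lies in the 0^k suffix of v'
    have h1 : p[ℓ-1]? = some true := by
      rw [hppt (ℓ-1) (by omega)]
      exact hvtrue _ (by omega)
    have h2 : p[ℓ-1]? = some false := by
      rw [hp (ℓ-1) (by omega)]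
      exact hv'zero _ (by omega) (by omega)
    rw [h1] at h2
    simp at h2
  · -- ℓ > k : the first k letters of p are 1's, occurring in v' at j = n - ℓ ≥ 1
    set j := n - ℓ with hj
    have hwin : ∀ i, i < k → v'[j + i]? = some true := by
      intro i hi
      have h1 := hp i (by omega)
      rw [hppt i (by omega)] at h1
      rw [← h1]
      exact hvtrue i hi
    rcases le_or_gt j k with hc1 | hc1
    · -- the window contains index k, where v' is 0
      have := hwin (k - j) (by omega)
      rw [show j + (k - j) = k by omega, hmk] at this
      simp at this
    rcases le_or_gt j (n - 2 * k) with hc2 | hc2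
    · -- the window lies fully inside the middle factor
      apply hnoT
      apply infix_of_getElem? _ (j - k) k (by simp [hlen]; omega)
      intro i hi
      rw [hmid, if_pos (by omega), show k + (j - k + i) = j + i by omega]
      exact hwin i hi
    · -- the window hits the trailing 0's
      have h1 := hwin (k - 1) (by omega)
      rw [hv'zero (j + (k-1)) (by omega) (by omega)] at h1
      simp at h1
end

section
/- For any fixed k ≥ 3, the set 𝒱^(k) = ⋃_{i ≥ 2k+2} V_i^(k) is a cross-fix-free code: every element of 𝒱^(k) is bifix-free, and for any two distinct v, v' ∈ 𝒱^(k), no nonempty prefix of v (including v itself) equals a suffix of v', and no nonempty prefix of v' equals a suffix of v. -/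
lemma infix_of_run {m : List Bool} {k o : ℕ} (b : Bool) (ho : o + k ≤ m.length)
    (h : ∀ t (ht : t < k), m[o + t]'(by omega) = b) :
    List.replicate k b <:+: m := by
  refine ⟨m.take o, m.drop (o + k), ?_⟩
  have h1 : (m.drop o).take k = List.replicate k b := by
    apply List.ext_getElem
    · simp; omega
    · intro t h1 h2
      simp only [List.getElem_take, List.getElem_drop, List.getElem_replicate]
      exact h t (by simpa using h2)
  rw [← h1, ← List.drop_drop, List.append_assoc, List.take_append_drop, List.take_append_drop]

lemma gic {l : List Bool} {i j : ℕ} (h : i = j) (hi : i < l.length) :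
    l[i] = l[j]'(h ▸ hi) := by subst h; rfl

lemma canon {k : ℕ} (hk : 3 ≤ k) {v : List Bool} (hv : v ∈ VkSet k) :
    ∃ m : List Bool, v = List.replicate k true ++ (m ++ List.replicate k false) ∧
      2 ≤ m.length ∧ m.head? = some false ∧ m.getLast? = some true ∧
      ¬ List.replicate k false <:+: m ∧ ¬ List.replicate k true <:+: m := by
  simp only [VkSet, Set.mem_iUnion, Set.mem_setOf_eq] at hv
  obtain ⟨n, hn, hlen, hpre, hsuf, hh, hl, hf, ht⟩ := hv
  refine ⟨(v.drop k).take (n - 2 * k), ?_, ?_, hh, hl, hf, ht⟩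
  · obtain ⟨t, ht'⟩ := hpre
    obtain ⟨a, ha⟩ := hsuf
    have hdk : v.drop k = t := by
      rw [← ht']; simp
    have halen : a.length = n - k := by
      have := congrArg List.length ha
      simp at this; omega
    have hdrop : (v.drop k).drop (n - 2 * k) = List.replicate k false := by
      rw [List.drop_drop]
      have : k + (n - 2 * k) = n - k := by omega
      rw [this, ← ha, ← halen, List.drop_left]
    have key : v = List.replicate k true ++
        ((v.drop k).take (n - 2*k) ++ (v.drop k).drop (n - 2*k)) := by
      rw [List.take_append_drop, hdk, ← ht']
    rw [hdrop] at key
    exact key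
  · have : ((v.drop k).take (n - 2*k)).length = n - 2*k := by
      simp; omega
    omega

lemma gc_lo (k : ℕ) (m : List Bool) {i : ℕ} (h1 : i < k) :
    (List.replicate k true ++ (m ++ List.replicate k false))[i]'(by simp; omega) = true := by
  rw [List.getElem_append_left (by simpa using h1)]
  simp

lemma gc_mid (k : ℕ) (m : List Bool) {i : ℕ} (h2 : k ≤ i) (h3 : i < k + m.length) :
    (List.replicate k true ++ (m ++ List.replicate k false))[i]'(by simp; omega) =
      m[i - k]'(by omega) := by
  rw [List.getElem_append_right (by simpa using h2)]
  rw [List.getElem_append_left (by simp; omega)]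
  simp

lemma gc_hi (k : ℕ) (m : List Bool) {i : ℕ} (h2 : k + m.length ≤ i) (h3 : i < 2*k + m.length) :
    (List.replicate k true ++ (m ++ List.replicate k false))[i]'(by simp; omega) = false := by
  rw [List.getElem_append_right (by simp; omega)]
  rw [List.getElem_append_right (by simp; omega)]
  simp

lemma main_lemma {k : ℕ} (hk : 3 ≤ k) {v v' p : List Bool}
    (hv : v ∈ VkSet k) (hv' : v' ∈ VkSet k) (hp : p ≠ [])
    (hpre : p <+: v) (hsuf : p <:+ v') : v = v' ∧ p = v := by
  obtain ⟨m, hveq, hm2, hmh, hml, hmf, hmt⟩ := canon hk hv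
  obtain ⟨m', hweq, hm2', hmh', hml', hmf', hmt'⟩ := canon hk hv'
  have Lv : v.length = 2*k + m.length := by rw [hveq]; simp; omega
  have Lw : v'.length = 2*k + m'.length := by rw [hweq]; simp; omega
  have gv1 : ∀ i (h : i < v.length), i < k → v[i] = true := by
    intro i h hik
    rw [List.getElem_of_eq hveq h]; exact gc_lo k m hik
  have gv2 : ∀ i (h : i < v.length) (h2 : k ≤ i) (h3 : i < k + m.length),
      v[i] = m[i - k]'(by omega) := by
    intro i h h2 h3
    rw [List.getElem_of_eq hveq h]; exact gc_mid k m h2 h3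
  have gw3 : ∀ i (h : i < v'.length), k + m'.length ≤ i → v'[i] = false := by
    intro i h h2
    rw [List.getElem_of_eq hweq h]; exact gc_hi k m' h2 (by omega)
  have gw2 : ∀ i (h : i < v'.length) (h2 : k ≤ i) (h3 : i < k + m'.length),
      v'[i] = m'[i - k]'(by omega) := by
    intro i h h2 h3
    rw [List.getElem_of_eq hweq h]; exact gc_mid k m' h2 h3
  have hmlast : m[m.length - 1]'(by omega) = true := by
    rw [List.getLast?_eq_getElem?] at hml
    simpa [List.getElem?_eq_getElem (show m.length - 1 < m.length by omega)] using hml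
  have hm0' : m'[0]'(by omega) = false := by
    rw [List.head?_eq_getElem?] at hmh'
    simpa [List.getElem?_eq_getElem (show 0 < m'.length by omega)] using hmh'
  have hple : p.length ≤ v.length := hpre.length_le
  have hple' : p.length ≤ v'.length := hsuf.length_le
  have hp0 : 0 < p.length := List.length_pos_iff.mpr hp
  have hsg : ∀ t (h : t < p.length), p[t] = v'[v'.length - p.length + t]'(by omega) :=
    fun t h => hsuf.getElem h
  have hpg : ∀ t (h : t < p.length), p[t] = v[t]'(by omega) :=
    fun t h => hpre.getElem h
  -- Step 1 : k < p.length
  have hkp : k < p.length := by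
    by_contra hle
    push_neg at hle
    have h1 : p[p.length - 1]'(by omega) = true := by
      rw [hpg _ (by omega)]
      exact gv1 _ (by omega) (by omega)
    have h2 : p[p.length - 1]'(by omega) = false := by
      rw [hsg _ (by omega)]
      exact gw3 _ (by omega) (by omega)
    rw [h1] at h2; simp at h2
  have ptrue : ∀ t (h : t < k), p[t]'(by omega) = true := by
    intro t ht
    rw [hpg _ (by omega)]
    exact gv1 _ (by omega) ht
  -- Step 2: p = v'
  have hj : p.length = v'.length := by
    by_contra hne
    have hj1 : 1 ≤ v'.length - p.length := by omega
    rcases le_or_gt (v'.length - p.length) m'.length with hjm | hjm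
    · rcases le_or_gt (v'.length - p.length) k with hjk | hjk
      · have e1 : p[k - (v'.length - p.length)]'(by omega) = true := ptrue _ (by omega)
        have e2 := (hsg (k - (v'.length - p.length)) (by omega)).trans
          (gic (l := v') (j := k) (by omega) (by omega))
        have e3 := (gw2 k (by omega) (by omega) (by omega)).trans
          (gic (j := 0) (by omega) (by omega))
        rw [e1, e3, hm0'] at e2
        simp at e2
      · refine hmt' (infix_of_run (o := v'.length - p.length - k) true (by omega) ?_)
        intro t ht
        have e2 := hsg t (by omega)
        have e3 := (gw2 (v'.length - p.length + t) (by omega) (by omega) (by omega)).trans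
          (gic (j := v'.length - p.length - k + t) (by omega) (by omega))
        rw [ptrue t ht, e3] at e2
        exact e2.symm
    · have e2 := hsg (k - 1) (by omega)
      have e3 := gw3 (v'.length - p.length + (k - 1)) (by omega) (by omega)
      rw [ptrue (k - 1) (by omega), e3] at e2
      simp at e2
  have hpv' : p = v' := hsuf.eq_of_length hj
  subst hpv'
  -- Step 3: p = v
  have hpv : p = v := by
    rcases eq_or_lt_of_le hple with heq | hlt
    · exact hpre.eq_of_length heq
    · exfalso
      have hmm : m'.length < m.length := by omega
      have runfalse : ∀ t (h : t < k), v[k + m'.length + t]'(by omega) = false := by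
        intro t ht
        rw [← hpg (k + m'.length + t) (by omega)]
        exact gw3 (k + m'.length + t) (by omega) (by omega)
      rcases le_or_gt (m'.length + k) m.length with hc | hc
      · refine hmf (infix_of_run (o := m'.length) false (by omega) ?_)
        intro t ht
        have e3 := (gv2 (k + m'.length + t) (by omega) (by omega) (by omega)).trans
          (gic (j := m'.length + t) (by omega) (by omega))
        rw [← e3]
        exact runfalse t ht
      · have ht' : k + m.length - 1 - (k + m'.length) < k := by omega
        have e1 := runfalse (k + m.length - 1 - (k + m'.length)) ht'
        have e1' : v[k + m.length - 1]'(by omega) = false := by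
          rw [gic (j := k + m'.length + (k + m.length - 1 - (k + m'.length))) (by omega) (by omega)]
          exact e1
        have e3 := (gv2 (k + m.length - 1) (by omega) (by omega) (by omega)).trans
          (gic (j := m.length - 1) (by omega) (by omega))
        rw [e3, hmlast] at e1'
        simp at e1'
  exact ⟨hpv.symm, hpv⟩

/-- For any `k ≥ 3`, `𝒱^(k) = ⋃_{i ≥ 2k+2} V_i^(k)` is a
cross-fix-free code. -/
theorem stmt_2 (k : ℕ) (hk : 3 ≤ k) : CrossFixFree (VkSet k) := by
  constructor
  · intro v hv p hpne hpv hpre hsuf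
    exact hpv (main_lemma hk hv hv hpne hpre hsuf).2
  · intro v hv v' hv' hne p hpne hpre hsuf
    exact hne (main_lemma hk hv hv' hpne hpre hsuf).1
end

section
/- For any fixed k ≥ 3 and any two distinct strings v, v' ∈ 𝒱^(k), the string v is not a factor (contiguous substring) of v'. -/
lemma run_infix {w : List Bool} {c : Bool} {k p : ℕ} (hpk : p + k ≤ w.length)
    (h : ∀ j < k, w[p + j]? = some c) : List.replicate k c <:+: w := by
  have heq : (w.drop p).take k = List.replicate k c := by
    apply List.ext_getElem?
    intro n
    rw [List.getElem?_take, List.getElem?_drop, List.getElem?_replicate]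
    by_cases hn : n < k
    · simp [hn, h n hn]
    · simp [hn]
  rw [← heq]
  exact ((w.drop p).take_prefix k).isInfix.trans (w.drop_suffix p).isInfix

lemma getElem?_mid (T M F : List Bool) (p : ℕ) (hp : p < M.length) :
    (T ++ M ++ F)[T.length + p]? = M[p]? := by
  rw [List.append_assoc, List.getElem?_append_right (by omega), Nat.add_sub_cancel_left,
    List.getElem?_append, if_pos hp]

lemma Vnk_decomp {n k : ℕ} (hn : 2*k+2 ≤ n) {v : List Bool} (hv : v ∈ Vnk n k) :
    ∃ w : List Bool, v = List.replicate k true ++ w ++ List.replicate k false ∧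
      w.length = n - 2*k ∧ w.head? = some false ∧ w.getLast? = some true ∧
      ¬ List.replicate k false <:+: w ∧ ¬ List.replicate k true <:+: w := by
  obtain ⟨hlen, hpre, hsuf, hh, hl, hf, ht⟩ := hv
  refine ⟨(v.drop k).take (n - 2*k), ?_, ?_, hh, hl, hf, ht⟩
  · obtain ⟨t, ht'⟩ := hpre
    obtain ⟨s, hs'⟩ := hsuf
    have h1 : v.take k = List.replicate k true := by
      rw [← ht', List.take_left' (by simp)]
    have h2 : v.drop (n - k) = List.replicate k false := by
      rw [← hs', List.drop_left' (by
        have : s.length + k = n := by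
          have := congrArg List.length hs'
          simpa [hlen] using this
        omega)]
    have h3 : (v.drop k).drop (n - 2*k) = v.drop (n - k) := by
      rw [List.drop_drop]
      congr 1
      omega
    calc v = v.take k ++ v.drop k := (List.take_append_drop k v).symm
      _ = v.take k ++ ((v.drop k).take (n - 2*k) ++ (v.drop k).drop (n - 2*k)) := by
          rw [List.take_append_drop (n - 2*k) (v.drop k)]
      _ = List.replicate k true ++ (v.drop k).take (n - 2*k) ++ List.replicate k false := by
          rw [h1, h3, h2, List.append_assoc]
  · simp [hlen]; omega

/-- For any `k ≥ 3` and distinct `v, v' ∈ 𝒱^(k)`, `v` is not a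
factor of `v'`. -/
theorem stmt_3 (k : ℕ) (hk : 3 ≤ k) :
    ∀ v ∈ VkSet k, ∀ v' ∈ VkSet k, v ≠ v' → ¬ v <:+: v' := by
  intro v hv v' hv' hne hinf
  simp only [VkSet, Set.mem_iUnion, Set.mem_setOf_eq, exists_prop] at hv hv'
  obtain ⟨n, hn, hvn⟩ := hv
  obtain ⟨m, hm, hvm⟩ := hv'
  obtain ⟨w, hw, hwl, hwh, hwlast, hwf, hwt⟩ := Vnk_decomp hn hvn
  obtain ⟨w', hw', hwl', hwh', hwlast', hwf', hwt'⟩ := Vnk_decomp hm hvm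
  obtain ⟨a, b, hab⟩ := hinf
  have hvlen : v.length = 2*k + w.length := by rw [hw]; simp; omega
  have hv'len : v'.length = 2*k + w'.length := by rw [hw']; simp; omega
  have hLw : 2 ≤ w.length := by omega
  have hLw' : 2 ≤ w'.length := by omega
  -- occurrence fact
  have hocc : ∀ j, j < v.length → v'[a.length + j]? = v[j]? := by
    intro j hj
    rw [← hab, List.append_assoc, List.getElem?_append_right (by omega),
      Nat.add_sub_cancel_left, List.getElem?_append, if_pos hj]
  have hlens : a.length + v.length + b.length = v'.length := by
    rw [← hab]; simp; omega
  -- structure facts about v'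
  have hM' : ∀ p, p < w'.length → v'[k + p]? = w'[p]? := by
    intro p hp
    have := getElem?_mid (List.replicate k true) w' (List.replicate k false) p hp
    rw [List.length_replicate] at this
    rw [hw', this]
  have hv'k : v'[k]? = some false := by
    obtain ⟨ys, hys⟩ := List.head?_eq_some_iff.mp hwh'
    have := hM' 0 (by omega)
    rw [Nat.add_zero] at this
    rw [this, hys]
    simp
  have hv'last : v'[k + (w'.length - 1)]? = some true := by
    rw [hM' (w'.length - 1) (by omega), ← List.getLast?_eq_getElem?]
    exact hwlast'
  -- facts about v
  have hvT : ∀ j, j < k → v[j]? = some true := by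
    intro j hj
    rw [hw, List.append_assoc, List.getElem?_append,
      if_pos (by simpa using hj), List.getElem?_replicate, if_pos hj]
  have hvF : ∀ j, j < k → v[(k + w.length) + j]? = some false := by
    intro j hj
    have hlen2 : (List.replicate k true ++ w).length = k + w.length := by simp
    rw [hw, List.getElem?_append_right (by omega), hlen2,
      Nat.add_sub_cancel_left, List.getElem?_replicate, if_pos hj]
  -- Step 1 : a = []
  have ha : a.length = 0 := by
    by_contra ha0
    have ha1 : 1 ≤ a.length := by omega
    have hik : k < a.length := by
      by_contra h'
      push_neg at h'
      have h1 := hocc (k - a.length) (by omega)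
      have h2 := hvT (k - a.length) (by omega)
      rw [show a.length + (k - a.length) = k by omega, hv'k, h2] at h1
      simp at h1
    have hiw : a.length ≤ w'.length := by omega
    refine hwt' (run_infix (p := a.length - k) (by omega) ?_)
    intro j hj
    have h1 := hM' ((a.length - k) + j) (by omega)
    have h2 := hocc j (by omega)
    have h3 := hvT j (by omega)
    rw [show k + ((a.length - k) + j) = a.length + j by omega, h2, h3] at h1
    exact h1.symm
  -- Step 2 : b = []
  have hb : b.length = 0 := by
    by_contra hb0
    have hb1 : 1 ≤ b.length := by omega
    have hfa : ∀ j, j < k → v'[(k + w.length) + j]? = some false := by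
      intro j hj
      have h1 := hocc ((k + w.length) + j) (by omega)
      rw [ha, Nat.zero_add] at h1
      rw [h1, hvF j hj]
    have hwle : w.length + k ≤ w'.length := by
      by_contra h'
      push_neg at h'
      have hj : (w'.length - 1) - w.length < k := by omega
      have h1 := hfa ((w'.length - 1) - w.length) hj
      rw [show (k + w.length) + ((w'.length - 1) - w.length) = k + (w'.length - 1) by omega,
        hv'last] at h1
      simp at h1
    refine hwf' (run_infix (p := w.length) (by omega) ?_)
    intro j hj
    have h1 := hM' (w.length + j) (by omega)
    rw [show k + (w.length + j) = (k + w.length) + j by omega, hfa j hj] at h1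
    exact h1.symm
  apply hne
  rw [List.eq_nil_of_length_eq_zero ha, List.eq_nil_of_length_eq_zero hb] at hab
  simpa using hab
end

section
/- For any fixed k ≥ 3, the set 𝒱^(k) ∪ {1^k 0^k} is a cross-fix-free code in which, moreover, no codeword is a factor of another: every element is bifix-free, for any two distinct elements no nonempty prefix of one equals a suffix of the other, and no element is a factor of a distinct element. -/
/-!
Every word of the code begins with `1^k`, ends with `0^k`, and contains `1^k` only as its prefix
and `0^k` only as its suffix: the middle part begins with `0`, ends with `1` and has no run of
length `k`, so no run of length `k` can straddle its borders. Now let a nonempty prefix `p` of `v`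
be a suffix of `v'`. If `|p| ≤ k`, then `p` would consist of ones and of zeros at once. Otherwise
`p` begins with `1^k`, which occurs in `v'` only at the start, so `p = v'`; and `v'` cannot be a
proper prefix of `v`, since then the final `0^k` of `v'` would occur in `v` before its end.
A factor of a codeword that is itself a codeword is a prefix of it for the same reason.
-/

open List

theorem replicate_infix_append_of_head?_ne {α : Type*} {a : α} {k : ℕ} {x y : List α}
    (hy : y.head? ≠ some a) (h : replicate k a <:+: x ++ y) :
    replicate k a <:+: x ∨ replicate k a <:+: y := by
  rcases infix_append_iff_ne_nil.mp h with hx | hy' | ⟨l₁, l₂, -, hl₂, hl, -, hpre⟩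
  · exact .inl hx
  · exact .inr hy'
  · obtain ⟨b, t, rfl⟩ := exists_cons_of_ne_nil hl₂
    obtain ⟨u, rfl⟩ := hpre
    have hb : b = a := eq_of_mem_replicate (hl ▸ mem_append_right l₁ mem_cons_self)
    simp [hb] at hy

theorem replicate_infix_append_of_getLast?_ne {α : Type*} {a : α} {k : ℕ} {x y : List α}
    (hx : x.getLast? ≠ some a) (h : replicate k a <:+: x ++ y) :
    replicate k a <:+: x ∨ replicate k a <:+: y := by
  have := replicate_infix_append_of_head?_ne (x := y.reverse) (y := x.reverse)
    (by rwa [head?_reverse]) (by simpa using h.reverse)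
  rw [← reverse_replicate, reverse_infix, reverse_infix] at this
  exact this.symm

structure Framed (k : ℕ) (x : List Bool) : Prop where
  prefix_ones : replicate k true <+: x
  suffix_zeros : replicate k false <:+ x
  not_ones_infix_tail : ¬ replicate k true <:+: x.tail
  not_zeros_infix_dropLast : ¬ replicate k false <:+: x.dropLast

namespace Framed

variable {k : ℕ} {v v' p : List Bool}

theorem eq_of_prefix_of_suffix (hv : Framed k v) (hv' : Framed k v') (hp : p ≠ [])
    (hpv : p <+: v) (hpv' : p <:+ v') : p = v' := by
  rcases le_or_gt p.length k with hle | hlt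
  · have hones : p <+: replicate k true :=
      prefix_of_prefix_length_le hpv hv.prefix_ones (by simpa using hle)
    have hzeros : p <:+ replicate k false :=
      suffix_of_suffix_length_le hpv' hv'.suffix_zeros (by simpa using hle)
    obtain ⟨b, hb⟩ := exists_mem_of_ne_nil p hp
    exact absurd ((eq_of_mem_replicate (hones.subset hb)).symm.trans
      (eq_of_mem_replicate (hzeros.subset hb))) Bool.true_eq_false.mp
  · have hones : replicate k true <+: p :=
      prefix_of_prefix_length_le hv.prefix_ones hpv (by simpa using hlt.le)
    obtain ⟨_ | ⟨c, s⟩, rfl⟩ := hpv'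
    · rfl
    · exact absurd (hones.isInfix.trans (infix_append_right (l₁ := s))) hv'.not_ones_infix_tail

theorem eq_of_prefix (hv : Framed k v) (hv' : Framed k v') (h : v' <+: v) : v' = v := by
  obtain ⟨b, rfl⟩ := h
  rcases b with _ | ⟨c, b⟩
  · simp
  · refine absurd ?_ hv.not_zeros_infix_dropLast
    rw [dropLast_append_of_ne_nil (cons_ne_nil c b)]
    exact hv'.suffix_zeros.isInfix.trans infix_append_left

theorem eq_of_infix (hv : Framed k v) (hv' : Framed k v') (h : v <:+: v') : v = v' := by
  obtain ⟨_ | ⟨c, s⟩, t, rfl⟩ := h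
  · exact hv'.eq_of_prefix hv ⟨t, rfl⟩
  · exact absurd (hv.prefix_ones.isInfix.trans (infix_append s _ t)) hv'.not_ones_infix_tail

end Framed

theorem strongCrossFixFree_of_forall_framed {k : ℕ} {X : Set (List Bool)}
    (hX : ∀ x ∈ X, Framed k x) : StrongCrossFixFree X := by
  refine ⟨⟨fun v hv p hp hpv hpre hsuf => ?_, fun v hv v' hv' hne p hp hpre hsuf => ?_⟩,
    fun v hv v' hv' hne h => hne ((hX v hv).eq_of_infix (hX v' hv') h)⟩
  · exact hpv ((hX v hv).eq_of_prefix_of_suffix (hX v hv) hp hpre hsuf)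
  · obtain rfl := (hX v hv).eq_of_prefix_of_suffix (hX v' hv') hp hpre hsuf
    exact hne ((hX v hv).eq_of_prefix (hX p hv') hpre).symm

theorem framed_replicate_append_replicate {k : ℕ} {m : List Bool} (hk : 0 < k)
    (hhead : m.head? ≠ some true) (hlast : m.getLast? ≠ some false)
    (hones : ¬ replicate k true <:+: m) (hzeros : ¬ replicate k false <:+: m) :
    Framed k (replicate k true ++ m ++ replicate k false) := by
  have not_infix_replicate {a b : Bool} (hab : a ≠ b) (n : ℕ) :
      ¬ replicate k a <:+: replicate n b := fun h =>
    hab (eq_of_mem_replicate (h.subset (mem_replicate.mpr ⟨hk.ne', rfl⟩)))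
  have htail : (replicate k true ++ m ++ replicate k false).tail =
      replicate (k - 1) true ++ (m ++ replicate k false) := by
    obtain ⟨j, rfl⟩ : ∃ j, k = j + 1 := ⟨k - 1, by omega⟩
    rw [Nat.add_sub_cancel, append_assoc]
    rfl
  have hdropLast : (replicate k true ++ m ++ replicate k false).dropLast =
      replicate k true ++ m ++ replicate (k - 1) false := by
    obtain ⟨j, rfl⟩ : ∃ j, k = j + 1 := ⟨k - 1, by omega⟩
    rw [replicate_succ' (n := j) (a := false), ← append_assoc, dropLast_concat,
      Nat.add_sub_cancel]
  refine ⟨(prefix_append _ _).trans (prefix_append _ _), ⟨_, rfl⟩, fun h => ?_, fun h => ?_⟩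
  · rw [htail] at h
    have hhead' : (m ++ replicate k false).head? ≠ some true := by
      rw [head?_append]
      cases hm : m.head? <;> simp_all [head?_replicate, hk.ne']
    rcases replicate_infix_append_of_head?_ne hhead' h with h | h
    · exact absurd h.length_le (by simp; omega)
    rcases replicate_infix_append_of_head?_ne (by simp [head?_replicate]) h with h | h
    · exact hones h
    · exact not_infix_replicate (by decide) _ h
  · rw [hdropLast] at h
    have hlast' : (replicate k true ++ m).getLast? ≠ some false := by
      rw [getLast?_append]
      cases hm : m.getLast? <;> simp_all [getLast?_replicate, hk.ne']
    rcases replicate_infix_append_of_getLast?_ne hlast' h with h | h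
    · rcases replicate_infix_append_of_getLast?_ne (by simp [getLast?_replicate]) h with h | h
      · exact not_infix_replicate (by decide) _ h
      · exact hzeros h
    · exact absurd h.length_le (by simp; omega)

theorem eq_replicate_append_middle_of_mem_Vnk {n k : ℕ} {v : List Bool} (hv : v ∈ Vnk n k) :
    v = replicate k true ++ (v.drop k).take (n - 2 * k) ++ replicate k false := by
  obtain ⟨hlen, hpre, hsuf, hhead, -⟩ := hv
  have hn : 2 * k < n := by
    by_contra! hn
    simp [Nat.sub_eq_zero_of_le hn] at hhead
  have hpre' : v.take k = replicate k true := by simpa using (prefix_iff_eq_take.mp hpre).symm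
  have hsuf' : v.drop (n - k) = replicate k false := by
    simpa [hlen] using (suffix_iff_eq_drop.mp hsuf).symm
  conv_lhs => rw [← take_append_drop k v, ← take_append_drop (n - 2 * k) (v.drop k)]
  rw [drop_drop, hpre', show k + (n - 2 * k) = n - k by omega, hsuf', append_assoc]

theorem framed_of_mem_VkSet {k : ℕ} {v : List Bool} (hk : 0 < k) (hv : v ∈ VkSet k) :
    Framed k v := by
  simp only [VkSet, Set.mem_iUnion] at hv
  obtain ⟨n, -, hvn⟩ := hv
  rw [eq_replicate_append_middle_of_mem_Vnk hvn]
  obtain ⟨-, -, -, hhead, hlast, hzeros, hones⟩ := hvn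
  exact framed_replicate_append_replicate hk (by simp [hhead]) (by simp [hlast]) hones hzeros

/-- For any `k ≥ 3`, the set `𝒱^(k) ∪ {1^k 0^k}` is a
cross-fix-free code in which, moreover, no codeword is a factor of another. -/
theorem stmt_4 (k : ℕ) (hk : 3 ≤ k) :
    StrongCrossFixFree (VkSet k ∪ {List.replicate k true ++ List.replicate k false}) := by
  have hk0 : 0 < k := by omega
  refine strongCrossFixFree_of_forall_framed (k := k) fun x hx => ?_
  rcases hx with hx | rfl
  · exact framed_of_mem_VkSet hk0 hx
  · simpa using framed_replicate_append_replicate (m := []) hk0 (by simp) (by simp)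
      (by simp [hk0.ne']) (by simp [hk0.ne'])
end

section
/- For any fixed k ≥ 3 and any ℓ ≥ 1, one has r_ℓ^(k) = (f_{ℓ−1}^(k−1) + d_ℓ^(k)) / 2. -/
/-!
Let `N_b(ℓ)` count the strings of length `ℓ` that start with 0, end with `b` and contain no run
of `k` equal letters, the empty string counting as ending with 1. Stripping the final run, of
length `1 ≤ j ≤ k - 1`, gives `N_b(ℓ) = ∑_{ℓ-k < m < ℓ} N_{¬b}(m)` for `ℓ ≥ 1`. Hence
`N_1 + N_0` and `N_1 - N_0` obey the window recurrences `s(ℓ) = ∑_{ℓ-k < m < ℓ} s(m)` and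
`h(ℓ) = -∑_{ℓ-k < m < ℓ} h(m)` with `s(0) = h(0) = 1`. These are also satisfied by
`f_{ℓ-1}^(k-1)` (read as `f_0^(k-1) = 1` at `ℓ = 0`) and by `d_ℓ^(k)`; for the latter because
`d_ℓ^(k) = e(ℓ + 1) - e(ℓ)` with `e` the indicator of `n ≡ 1 (mod k)`, so its window sums
telescope. Finally `r_ℓ^(k) = N_1(ℓ)`.
-/

open Finset in
theorem eq_of_window_recurrence {R : Type*} [Semiring R] (p : ℕ) (c : R) {x y : ℕ → R}
    (h0 : x 0 = y 0) (hx : ∀ ℓ, 1 ≤ ℓ → x ℓ = c * ∑ m ∈ Ico (ℓ - p) ℓ, x m)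
    (hy : ∀ ℓ, 1 ≤ ℓ → y ℓ = c * ∑ m ∈ Ico (ℓ - p) ℓ, y m) : x = y := by
  funext ℓ
  induction ℓ using Nat.strong_induction_on with
  | _ ℓ ih =>
    rcases Nat.eq_zero_or_pos ℓ with rfl | hℓ
    · exact h0
    · rw [hx ℓ hℓ, hy ℓ hℓ]
      congr 1
      exact sum_congr rfl fun m hm => ih m (mem_Ico.1 hm).2

lemma f_of_lt {p n : ℕ} (h : n < p) : f p n = 2 ^ n := by
  rw [f, dif_pos h]

lemma f_of_le {p n : ℕ} (h : p ≤ n) : f p n = ∑ i ∈ Finset.range p, f p (n - (i + 1)) := by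
  rw [f, dif_neg (by omega)]
  exact Finset.sum_attach (Finset.range p) fun i => f p (n - (i + 1))

open Finset in
lemma f_pred_eq_sum_window {p ℓ : ℕ} (hp : 1 ≤ p) (hℓ : 1 ≤ ℓ) :
    f p (ℓ - 1) = ∑ m ∈ Ico (ℓ - p) ℓ, f p (m - 1) := by
  rcases le_or_gt ℓ p with hℓp | hpℓ
  · obtain ⟨n, rfl⟩ : ∃ n, ℓ = n + 1 := ⟨ℓ - 1, by omega⟩
    have hpow : ∀ m ∈ range (n + 1), f p (m - 1) = 2 ^ (m - 1) := fun m hm =>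
      f_of_lt (by simp at hm; omega)
    rw [show n + 1 - p = 0 by omega, ← range_eq_Ico, sum_congr rfl hpow, sum_range_succ',
      f_of_lt (by omega)]
    simp only [Nat.add_sub_cancel, Nat.zero_sub, pow_zero, Nat.geomSum_eq le_rfl]
    have := Nat.one_le_two_pow (n := n)
    omega
  · rw [f_of_le (by omega), sum_Ico_eq_sum_range, show ℓ - (ℓ - p) = p by omega,
      ← sum_range_reflect]
    exact sum_congr rfl fun i hi => by simp at hi; congr 1; omega

lemma d_eq_sub {k : ℕ} (hk : 2 ≤ k) (n : ℕ) :
    d k n = (if (n + 1) % k = 1 then 1 else 0) - (if n % k = 1 then 1 else 0) := by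
  have h1 : 1 % k = 1 := Nat.mod_eq_of_lt (by omega)
  have hlt := Nat.mod_lt n (by omega : 0 < k)
  rw [d, Nat.add_mod_eq_ite, h1]
  split_ifs <;> omega

open Finset in
lemma d_eq_neg_sum_window {k ℓ : ℕ} (hk : 2 ≤ k) (hℓ : 1 ≤ ℓ) :
    d k ℓ = -∑ m ∈ Ico (ℓ - (k - 1)) ℓ, d k m := by
  simp_rw [d_eq_sub hk]
  rw [sum_Ico_sub (fun n => if n % k = 1 then (1 : ℤ) else 0) (by omega)]
  have hper : (ℓ + 1) % k = 1 ↔ (ℓ - (k - 1)) % k = 1 := by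
    rcases le_or_gt k (ℓ + 1) with h | h
    · rw [Nat.mod_eq_sub_mod h, show ℓ + 1 - k = ℓ - (k - 1) by omega]
    · rw [Nat.mod_eq_of_lt h, show ℓ - (k - 1) = 0 by omega, Nat.zero_mod]
      omega
  simp only [hper]
  ring

namespace List

def NoRun (k : ℕ) (w : List Bool) : Prop := ∀ c, ¬ replicate k c <:+: w

lemma NoRun.of_infix {k : ℕ} {v w : List Bool} (hw : NoRun k w) (hvw : v <:+: w) : NoRun k v :=
  fun c hc => hw c (hc.trans hvw)

lemma rtakeWhile_append_replicate {u : List Bool} {b : Bool} (hu : u.getLast? ≠ some b) (j : ℕ) :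
    (u ++ replicate j b).rtakeWhile (· == b) = replicate j b := by
  induction j with
  | zero =>
    rw [replicate_zero, append_nil, rtakeWhile_eq_nil_iff]
    intro hl hb
    rw [getLast?_eq_some_getLast hl] at hu
    simp_all
  | succ j ih => rw [replicate_succ', ← append_assoc, rtakeWhile_concat_pos _ _ _ (by simp), ih]

lemma noRun_append_replicate_iff {k j : ℕ} {u : List Bool} {b : Bool} (hu : u.getLast? ≠ some b) :
    NoRun k (u ++ replicate j b) ↔ NoRun k u ∧ j < k := by
  refine ⟨fun h => ⟨h.of_infix (prefix_append _ _).isInfix, ?_⟩, fun ⟨hu', hj⟩ c hc => ?_⟩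
  · by_contra! hkj
    exact h b ((infix_replicate_iff.2 ⟨by simpa using hkj, by simp⟩).trans
      (suffix_append _ _).isInfix)
  rcases infix_append_iff.1 hc with hc | hc | ⟨l₁, l₂, he, h₁, h₂⟩
  · exact hu' c hc
  · simp [infix_replicate_iff] at hc
    omega
  obtain ⟨hlen, hl₁, hl₂⟩ := append_eq_replicate_iff.1 he.symm
  obtain ⟨hl₂j, hl₂b⟩ := infix_replicate_iff.1 h₂.isInfix
  rcases Nat.eq_zero_or_pos l₁.length with h0 | h0
  · omega
  rcases Nat.eq_zero_or_pos l₂.length with h0' | h0'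
  · rw [length_eq_zero_iff.1 h0', append_nil] at he
    exact hu' c (he ▸ h₁.isInfix)
  -- the run straddles the junction, so `c = b` is the last letter of `u`
  have hcb : c = b := (replicate_right_inj h0'.ne').1 (hl₂.symm.trans hl₂b)
  obtain ⟨t, rfl⟩ := h₁
  rw [hl₁] at hu
  simp [getLast?_append, getLast?_replicate, Nat.pos_iff_ne_zero.1 h0, hcb] at hu

lemma exists_eq_append_replicate {α : Type*} (w : List α) (b : α) :
    ∃ u j, w = u ++ replicate j b ∧ u.getLast? ≠ some b := by
  induction w using reverseRecOn with
  | nil => exact ⟨[], 0, rfl, by simp⟩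
  | append_singleton v a ih =>
    by_cases hab : a = b
    · obtain ⟨u, j, rfl, hu⟩ := ih
      exact ⟨u, j + 1, by rw [hab, replicate_succ', append_assoc], hu⟩
    · exact ⟨v ++ [a], 0, by simp, by simpa using hab⟩

end List

open List

-- The empty string counts as ending with `1`, matching the convention `r_0^(k) = 1`.
def noRunStrings (k : ℕ) (b : Bool) (ℓ : ℕ) : Set (List Bool) :=
  {w | w.length = ℓ ∧ w.headD false = false ∧ w.getLastD true = b ∧ NoRun k w}

lemma noRunStrings_finite (k : ℕ) (b : Bool) (ℓ : ℕ) : (noRunStrings k b ℓ).Finite :=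
  (List.finite_length_eq Bool ℓ).subset fun _ hw => hw.1

lemma ncard_noRunStrings_zero {k : ℕ} (hk : 1 ≤ k) (b : Bool) :
    (noRunStrings k b 0).ncard = if b then 1 else 0 := by
  have hnil : NoRun k [] := fun c hc => by simp [infix_nil] at hc; omega
  have : noRunStrings k b 0 = if b then {[]} else ∅ := by
    ext w
    rcases w with _ | ⟨a, t⟩ <;> cases b <;> simp [noRunStrings, hnil]
  rw [this]
  split <;> simp

lemma getLast?_ne_some_of_getLastD_eq_not {u : List Bool} {b : Bool} (h : u.getLastD true = !b) :
    u.getLast? ≠ some b := by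
  intro h'
  rw [getLastD_eq_getLast?, h'] at h
  simp at h

lemma append_replicate_mem_noRunStrings {k m j : ℕ} {b : Bool} {u : List Bool}
    (hu : u ∈ noRunStrings k (!b) m) (hj : 1 ≤ j) (hjk : j < k) :
    u ++ replicate j b ∈ noRunStrings k b (m + j) := by
  obtain ⟨hlen, hhead, hlast, hrun⟩ := hu
  refine ⟨by simp [hlen], ?_, ?_,
    (noRun_append_replicate_iff (getLast?_ne_some_of_getLastD_eq_not hlast)).2 ⟨hrun, hjk⟩⟩
  · cases u with
    | nil =>
      obtain rfl : b = false := by simpa using hlast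
      obtain ⟨i, rfl⟩ : ∃ i, j = i + 1 := ⟨j - 1, by omega⟩
      simp [replicate_succ]
    | cons a t => simpa using hhead
  · simp [getLastD_eq_getLast?, getLast?_append, getLast?_replicate, show j ≠ 0 by omega]

lemma exists_append_replicate_of_mem_noRunStrings {k ℓ : ℕ} {b : Bool} {w : List Bool}
    (hw : w ∈ noRunStrings k b ℓ) (hℓ : 1 ≤ ℓ) :
    ∃ j, 1 ≤ j ∧ j < k ∧ ∃ u ∈ noRunStrings k (!b) (ℓ - j), w = u ++ replicate j b := by
  obtain ⟨u, j, rfl, hu⟩ := exists_eq_append_replicate w b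
  obtain ⟨hlen, hhead, hlast, hrun⟩ := hw
  obtain ⟨hrun', hjk⟩ := (noRun_append_replicate_iff hu).1 hrun
  have hj : 1 ≤ j := by
    by_contra! hj0
    have hne : u ≠ [] := by rintro rfl; simp at hlen; omega
    simp_all [getLastD_eq_getLast?, getLast?_eq_some_getLast hne]
  refine ⟨j, hj, hjk, u, ⟨by simp at hlen; omega, ?_, ?_, hrun'⟩, rfl⟩
  · cases u with
    | nil => rfl
    | cons a t => simpa using hhead
  · cases hu0 : u.getLast? with
    | none =>
      rw [getLast?_eq_none_iff] at hu0
      subst hu0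
      obtain ⟨i, rfl⟩ : ∃ i, j = i + 1 := ⟨j - 1, by omega⟩
      simp only [nil_append, replicate_succ, headD_cons] at hhead
      simp [hhead]
    | some a =>
      rw [getLastD_eq_getLast?, hu0]
      simp only [hu0, ne_eq, Option.some.injEq] at hu
      cases a <;> cases b <;> simp_all

theorem noRunStrings_eq_biUnion {k ℓ : ℕ} (hℓ : 1 ≤ ℓ) (b : Bool) :
    noRunStrings k b ℓ =
      ⋃ m ∈ Set.Ico (ℓ - (k - 1)) ℓ, (· ++ replicate (ℓ - m) b) '' noRunStrings k (!b) m := by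
  ext w
  simp only [Set.mem_iUnion, Set.mem_image, Set.mem_Ico, exists_prop]
  constructor
  · intro hw
    obtain ⟨j, hj, hjk, u, hu, rfl⟩ := exists_append_replicate_of_mem_noRunStrings hw hℓ
    have hjℓ : j ≤ ℓ := by simp [← hw.1]
    exact ⟨ℓ - j, ⟨by omega, by omega⟩, u, hu, by rw [Nat.sub_sub_self hjℓ]⟩
  · rintro ⟨m, ⟨hm₁, hm₂⟩, u, hu, rfl⟩
    simpa [Nat.add_sub_cancel' hm₂.le] using
      append_replicate_mem_noRunStrings hu (j := ℓ - m) (by omega) (by omega)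

theorem ncard_noRunStrings {k ℓ : ℕ} (hℓ : 1 ≤ ℓ) (b : Bool) :
    (noRunStrings k b ℓ).ncard =
      ∑ m ∈ Finset.Ico (ℓ - (k - 1)) ℓ, (noRunStrings k (!b) m).ncard := by
  have hdisj : (Set.Ico (ℓ - (k - 1)) ℓ).PairwiseDisjoint
      fun m => (· ++ replicate (ℓ - m) b) '' noRunStrings k (!b) m := by
    intro m hm m' hm' hne
    refine Set.disjoint_left.2 ?_
    rintro _ ⟨u, hu, rfl⟩ ⟨u', hu', he⟩
    have hrun := congrArg (fun w => (w.rtakeWhile (· == b)).length) he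
    simp only [rtakeWhile_append_replicate (getLast?_ne_some_of_getLastD_eq_not hu.2.2.1),
      rtakeWhile_append_replicate (getLast?_ne_some_of_getLastD_eq_not hu'.2.2.1),
      length_replicate] at hrun
    exact hne (by simp only [Set.mem_Ico] at hm hm'; omega)
  rw [noRunStrings_eq_biUnion hℓ, (Set.finite_Ico _ _).ncard_biUnion
    (fun m _ => (noRunStrings_finite _ _ _).image _) hdisj, ← Finset.coe_Ico, finsum_mem_coe_finset]
  exact Finset.sum_congr rfl fun m _ => Set.ncard_image_of_injective _ (append_left_injective _)

lemma r_eq_ncard_noRunStrings {k : ℕ} (hk : 1 ≤ k) (ℓ : ℕ) :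
    r k ℓ = (noRunStrings k true ℓ).ncard := by
  rcases Nat.eq_zero_or_pos ℓ with rfl | hℓ
  · rw [ncard_noRunStrings_zero hk]
    rfl
  rw [r, if_neg hℓ.ne']
  congr 1
  ext w
  rcases w with _ | ⟨a, t⟩
  · simp [Rset, noRunStrings, hℓ.ne]
  · simp [Rset, noRunStrings, NoRun, getLastD_eq_getLast?,
      getLast?_eq_some_getLast (cons_ne_nil a t)]

open Finset in
theorem ncard_noRunStrings_add {k : ℕ} (hk : 2 ≤ k) (ℓ : ℕ) :
    ((noRunStrings k true ℓ).ncard + (noRunStrings k false ℓ).ncard : ℤ) = f (k - 1) (ℓ - 1) := by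
  refine congrFun (eq_of_window_recurrence (k - 1) 1
    (x := fun ℓ => ((noRunStrings k true ℓ).ncard + (noRunStrings k false ℓ).ncard : ℤ))
    (y := fun ℓ => (f (k - 1) (ℓ - 1) : ℤ)) ?_ ?_ ?_) ℓ
  · simp [ncard_noRunStrings_zero (by omega : 1 ≤ k), f_of_lt (by omega : 0 < k - 1)]
  · intro ℓ hℓ
    simp only [ncard_noRunStrings hℓ, Bool.not_true, Bool.not_false, one_mul]
    push_cast
    rw [add_comm, sum_add_distrib]
  · intro ℓ hℓ
    rw [one_mul]
    exact_mod_cast f_pred_eq_sum_window (by omega) hℓ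

open Finset in
theorem ncard_noRunStrings_sub {k : ℕ} (hk : 2 ≤ k) (ℓ : ℕ) :
    ((noRunStrings k true ℓ).ncard - (noRunStrings k false ℓ).ncard : ℤ) = d k ℓ := by
  refine congrFun (eq_of_window_recurrence (k - 1) (-1)
    (x := fun ℓ => ((noRunStrings k true ℓ).ncard - (noRunStrings k false ℓ).ncard : ℤ))
    (y := d k) ?_ ?_ ?_) ℓ
  · simp [ncard_noRunStrings_zero (by omega : 1 ≤ k), d]
  · intro ℓ hℓ
    simp only [ncard_noRunStrings hℓ, Bool.not_true, Bool.not_false, neg_one_mul]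
    push_cast
    rw [sum_sub_distrib]
    ring
  · intro ℓ hℓ
    rw [neg_one_mul]
    exact d_eq_neg_sum_window hk hℓ

theorem stmt_6_general (k ℓ : ℕ) (hk : 3 ≤ k) :
    (r k ℓ : ℚ) = ((f (k - 1) (ℓ - 1) : ℚ) + (d k ℓ : ℚ)) / 2 := by
  have hsum := ncard_noRunStrings_add (k := k) (by omega) ℓ
  have hdiff := ncard_noRunStrings_sub (k := k) (by omega) ℓ
  rw [r_eq_ncard_noRunStrings (by omega), eq_div_iff two_ne_zero]
  exact_mod_cast (by linarith : ((noRunStrings k true ℓ).ncard : ℤ) * 2 = f (k - 1) (ℓ - 1) + d k ℓ)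

/-- For any `k ≥ 3` and `ℓ ≥ 1`,
`r_ℓ^(k) = (f_{ℓ-1}^(k-1) + d_ℓ^(k)) / 2`. -/
theorem stmt_6 (k ℓ : ℕ) (hk : 3 ≤ k) (hℓ : 1 ≤ ℓ) :
    (r k ℓ : ℚ) = ((f (k - 1) (ℓ - 1) : ℚ) + (d k ℓ : ℚ)) / 2 :=
  stmt_6_general k ℓ hk
end

section
/- For any fixed k ≥ 3 one has: S^(k)(n) = 2^{n+1} − 1 for 0 ≤ n ≤ k−1, and S^(k)(n) = (f_{n+2}^(k) − 2^k + 1 + ∑_{i=0}^{k−3} (k−2−i)(f_{i+1}^(k) + f_{n−i}^(k))) / (k−1) + f_0^(k) for all n ≥ k. -/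
lemma f_lt (k ℓ : ℕ) (h : ℓ < k) : f k ℓ = 2 ^ ℓ := by
  rw [f, dif_pos h]

lemma f_rec (k n : ℕ) (h : k ≤ n) : f k n = ∑ i ∈ Finset.range k, f k (n - (i + 1)) := by
  rw [f, dif_neg (by omega)]
  exact Finset.sum_attach (Finset.range k) (fun i => f k (n - (i + 1)))

lemma split_first {M : Type*} [AddCommMonoid M] (g : ℕ → M) (m : ℕ) (hm : 1 ≤ m) :
    ∑ i ∈ Finset.range m, g i = g 0 + ∑ i ∈ Finset.range (m - 1), g (i + 1) := by
  obtain ⟨l, rfl⟩ : ∃ l, m = l + 1 := ⟨m - 1, by omega⟩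
  rw [Finset.sum_range_succ']
  simp [add_comm]

lemma split_last {M : Type*} [AddCommMonoid M] (g : ℕ → M) (m : ℕ) (hm : 1 ≤ m) :
    ∑ i ∈ Finset.range m, g i = (∑ i ∈ Finset.range (m - 1), g i) + g (m - 1) := by
  obtain ⟨l, rfl⟩ : ∃ l, m = l + 1 := ⟨m - 1, by omega⟩
  rw [Finset.sum_range_succ]
  simp

lemma g1 (m : ℕ) : ∑ i ∈ Finset.range m, (2:ℚ) ^ i = 2 ^ m - 1 := by
  induction m with
  | zero => simp
  | succ n ih => rw [Finset.sum_range_succ, ih]; ring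

lemma g2 (m : ℕ) : ∑ i ∈ Finset.range m, (i:ℚ) * 2 ^ i = ((m:ℚ) - 2) * 2 ^ m + 2 := by
  induction m with
  | zero => simp
  | succ n ih => rw [Finset.sum_range_succ, ih]; push_cast; ring

lemma S_succ (k n : ℕ) : S k (n + 1) = S k n + f k (n + 1) := Finset.sum_range_succ _ _

lemma S_small (k : ℕ) (hk : 1 ≤ k) : ∀ n < k, S k n = 2 ^ (n + 1) - 1 := by
  intro n hn
  induction n with
  | zero => simp [S, f_lt k 0 hk]
  | succ m ih =>
    rw [S_succ, ih (by omega), f_lt k (m + 1) hn]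
    have : 1 ≤ 2 ^ (m + 1) := Nat.one_le_two_pow
    ring_nf
    omega

lemma fk (k : ℕ) (hk : 1 ≤ k) : (f k k : ℚ) = 2 ^ k - 1 := by
  rw [f_rec k k le_rfl]
  push_cast
  rw [Finset.sum_congr rfl (fun i hi => ?_), Finset.sum_range_reflect (fun i => (2:ℚ) ^ i) k, g1]
  simp only [Finset.mem_range] at hi
  rw [f_lt k _ (by omega)]
  push_cast
  congr 1
  omega

lemma fk1 (k : ℕ) (hk : 1 ≤ k) : (f k (k + 1) : ℚ) = 2 ^ (k + 1) - 3 := by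
  rw [f_rec k (k + 1) (by omega), Nat.cast_sum]
  rw [split_first (fun i => (f k (k + 1 - (i + 1)) : ℚ)) k hk]
  have h0 : (f k (k + 1 - (0 + 1)) : ℚ) = 2 ^ k - 1 := by
    rw [show k + 1 - (0 + 1) = k from by omega, fk k hk]
  rw [h0]
  rw [Finset.sum_congr rfl (fun i hi => ?_) (g := fun i => (2:ℚ) ^ ((k - 1 - 1 - i) + 1))]
  · rw [Finset.sum_range_reflect (fun i => (2:ℚ) ^ (i + 1)) (k - 1)]
    have : ∑ i ∈ Finset.range (k - 1), (2:ℚ) ^ (i + 1) = 2 * (2 ^ (k - 1) - 1) := by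
      rw [← g1 (k - 1), Finset.mul_sum]
      exact Finset.sum_congr rfl (fun i _ => by ring)
    rw [this]
    have h2 : (2:ℚ) ^ k = 2 ^ (k - 1) * 2 := by
      have h : k - 1 + 1 = k := by omega
      conv_lhs => rw [← h]
      rw [pow_succ]
    have h3 : (2:ℚ) ^ (k + 1) = 2 ^ (k - 1) * 4 := by
      have h : k - 1 + 2 = k + 1 := by omega
      conv_lhs => rw [← h]
      rw [pow_add]; norm_num
    rw [h2, h3]; ring
  · simp only [Finset.mem_range] at hi
    rw [f_lt k _ (by omega)]
    push_cast
    congr 1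
    omega

lemma fk2 (k : ℕ) (hk : 2 ≤ k) : (f k (k + 2) : ℚ) = 2 ^ (k + 2) - 8 := by
  rw [f_rec k (k + 2) (by omega), Nat.cast_sum]
  rw [split_first (fun i => (f k (k + 2 - (i + 1)) : ℚ)) k (by omega)]
  rw [split_first (fun i => (f k (k + 2 - (i + 1 + 1)) : ℚ)) (k - 1) (by omega)]
  have h0 : (f k (k + 2 - (0 + 1)) : ℚ) = 2 ^ (k + 1) - 3 := by
    rw [show k + 2 - (0 + 1) = k + 1 from by omega, fk1 k (by omega)]
  have h1 : (f k (k + 2 - (0 + 1 + 1)) : ℚ) = 2 ^ k - 1 := by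
    rw [show k + 2 - (0 + 1 + 1) = k from by omega, fk k (by omega)]
  rw [h0, h1]
  rw [Finset.sum_congr rfl (fun i hi => ?_) (g := fun i => (2:ℚ) ^ ((k - 1 - 1 - 1 - i) + 2))]
  · rw [Finset.sum_range_reflect (fun i => (2:ℚ) ^ (i + 2)) (k - 1 - 1)]
    have : ∑ i ∈ Finset.range (k - 1 - 1), (2:ℚ) ^ (i + 2) = 4 * (2 ^ (k - 2) - 1) := by
      rw [show k - 1 - 1 = k - 2 from by omega, ← g1 (k - 2), Finset.mul_sum]
      exact Finset.sum_congr rfl (fun i _ => by ring)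
    rw [this]
    have h2 : (2:ℚ) ^ k = 2 ^ (k - 2) * 4 := by
      have h : k - 2 + 2 = k := by omega
      conv_lhs => rw [← h]
      rw [pow_add]; norm_num
    have h3 : (2:ℚ) ^ (k + 1) = 2 ^ (k - 2) * 8 := by
      have h : k - 2 + 3 = k + 1 := by omega
      conv_lhs => rw [← h]
      rw [pow_add]; norm_num
    have h4 : (2:ℚ) ^ (k + 2) = 2 ^ (k - 2) * 16 := by
      have h : k - 2 + 4 = k + 2 := by omega
      conv_lhs => rw [← h]
      rw [pow_add]; norm_num
    rw [h2, h3, h4]; ring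
  · simp only [Finset.mem_range] at hi
    rw [f_lt k _ (by omega)]
    push_cast
    congr 1
    omega

lemma Skk (k : ℕ) (hk : 2 ≤ k) : (S k k : ℚ) = 2 ^ (k + 1) - 2 := by
  have h : k - 1 + 1 = k := by omega
  have h2 : S k k = S k (k - 1) + f k k := by
    conv_lhs => rw [← h, S_succ, h]
  have h3 : S k (k - 1) = 2 ^ k - 1 := by
    have := S_small k (by omega) (k - 1) (by omega)
    rwa [h] at this
  rw [h2, Nat.cast_add, h3, Nat.cast_sub Nat.one_le_two_pow, fk k (by omega)]
  push_cast
  ring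

lemma step_id (k n : ℕ) (hk : 3 ≤ k) (hn : k ≤ n) :
    (f k (n + 3) : ℚ) + ∑ i ∈ Finset.range (k - 2), ((k:ℚ) - 2 - i) * (f k (n + 1 - i) : ℚ)
      = (f k (n + 2) : ℚ) + (∑ i ∈ Finset.range (k - 2), ((k:ℚ) - 2 - i) * (f k (n - i) : ℚ))
        + ((k:ℚ) - 1) * (f k (n + 1) : ℚ) := by
  have e1 : (f k (n + 3) : ℚ) = (f k (n + 2) : ℚ) + ((f k (n + 1) : ℚ)
      + ∑ i ∈ Finset.range (k - 2), (f k (n - i) : ℚ)) := by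
    rw [f_rec k (n + 3) (by omega), Nat.cast_sum]
    rw [Finset.sum_congr rfl (fun i hi => by rw [show n + 3 - (i + 1) = n + 2 - i from by omega])
      (g := fun i => (f k (n + 2 - i) : ℚ))]
    rw [split_first (fun i => (f k (n + 2 - i) : ℚ)) k (by omega)]
    rw [Finset.sum_congr rfl (fun i hi => by rw [show n + 2 - (i + 1) = n + 1 - i from by omega])
      (g := fun i => (f k (n + 1 - i) : ℚ))]
    rw [split_first (fun i => (f k (n + 1 - i) : ℚ)) (k - 1) (by omega)]
    rw [Finset.sum_congr rfl (fun i hi => by rw [show n + 1 - (i + 1) = n - i from by omega])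
      (g := fun i => (f k (n - i) : ℚ))]
    rw [show k - 1 - 1 = k - 2 from by omega, show n + 2 - 0 = n + 2 from rfl,
      show n + 1 - 0 = n + 1 from rfl]
  have e2 : ∑ i ∈ Finset.range (k - 2), ((k:ℚ) - 2 - i) * (f k (n + 1 - i) : ℚ)
      = ((k:ℚ) - 2) * (f k (n + 1) : ℚ)
        + ∑ i ∈ Finset.range (k - 3), ((k:ℚ) - 3 - i) * (f k (n - i) : ℚ) := by
    rw [split_first (fun i => ((k:ℚ) - 2 - i) * (f k (n + 1 - i) : ℚ)) (k - 2) (by omega)]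
    rw [Finset.sum_congr rfl (fun i hi => ?_)
      (g := fun i => ((k:ℚ) - 3 - i) * (f k (n - i) : ℚ))]
    · rw [show k - 2 - 1 = k - 3 from by omega, show n + 1 - 0 = n + 1 from rfl]
      push_cast
      ring
    · rw [show n + 1 - (i + 1) = n - i from by omega]
      push_cast
      ring
  have e3 : ∑ i ∈ Finset.range (k - 2), ((k:ℚ) - 2 - i) * (f k (n - i) : ℚ)
      = (∑ i ∈ Finset.range (k - 3), ((k:ℚ) - 2 - i) * (f k (n - i) : ℚ))
        + (f k (n - (k - 3)) : ℚ) := by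
    rw [split_last (fun i => ((k:ℚ) - 2 - i) * (f k (n - i) : ℚ)) (k - 2) (by omega),
      show k - 2 - 1 = k - 3 from by omega]
    have hc : ((k - 3 : ℕ) : ℚ) = (k : ℚ) - 3 := by
      rw [Nat.cast_sub (by omega)]; norm_num
    rw [hc]
    ring
  have e4 : ∑ i ∈ Finset.range (k - 2), (f k (n - i) : ℚ)
      = (∑ i ∈ Finset.range (k - 3), (f k (n - i) : ℚ)) + (f k (n - (k - 3)) : ℚ) := by
    rw [split_last (fun i => (f k (n - i) : ℚ)) (k - 2) (by omega),
      show k - 2 - 1 = k - 3 from by omega]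
  have e5 : (∑ i ∈ Finset.range (k - 3), ((k:ℚ) - 3 - i) * (f k (n - i) : ℚ))
      + ∑ i ∈ Finset.range (k - 3), (f k (n - i) : ℚ)
      = ∑ i ∈ Finset.range (k - 3), ((k:ℚ) - 2 - i) * (f k (n - i) : ℚ) := by
    rw [← Finset.sum_add_distrib]
    exact Finset.sum_congr rfl (fun i _ => by ring)
  linear_combination e1 + e2 - e3 + e4 + e5

lemma key (k : ℕ) (hk : 3 ≤ k) : ∀ n, k ≤ n →
    ((k:ℚ) - 1) * ((S k n : ℚ) - 1)
      = (f k (n + 2) : ℚ) - 2 ^ k + 1 +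
          ∑ i ∈ Finset.range (k - 2),
            ((k : ℚ) - 2 - (i : ℚ)) * ((f k (i + 1) : ℚ) + (f k (n - i) : ℚ)) := by
  intro n hn
  induction n, hn using Nat.le_induction with
  | base =>
    rw [Skk k (by omega), fk2 k (by omega)]
    rw [split_first (fun i => ((k:ℚ) - 2 - (i:ℚ)) * ((f k (i + 1) : ℚ) + (f k (k - i) : ℚ)))
      (k - 2) (by omega)]
    have t0 : ((k:ℚ) - 2 - ((0:ℕ):ℚ)) * ((f k (0 + 1) : ℚ) + (f k (k - 0) : ℚ))
        = ((k:ℚ) - 2) * (2 ^ k + 1) := by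
      rw [f_lt k (0 + 1) (by omega), show k - 0 = k from rfl, fk k (by omega)]
      push_cast
      ring
    rw [t0, show k - 2 - 1 = k - 3 from by omega]
    have hterm : ∀ i ∈ Finset.range (k - 3),
        ((k:ℚ) - 2 - ((i + 1 : ℕ):ℚ)) * ((f k (i + 1 + 1) : ℚ) + (f k (k - (i + 1)) : ℚ))
          = ((k:ℚ) - 3 - (i:ℚ)) * 2 ^ (i + 2)
            + ((((k - 3 - 1 - i : ℕ)):ℚ) + 1) * 2 ^ ((k - 3 - 1 - i) + 3) := by
      intro i hi
      simp only [Finset.mem_range] at hi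
      rw [f_lt k (i + 1 + 1) (by omega), f_lt k (k - (i + 1)) (by omega)]
      have ec : ((k - 3 - 1 - i : ℕ) : ℚ) = (k:ℚ) - 4 - i := by
        rw [show k - 3 - 1 - i = k - (4 + i) from by omega, Nat.cast_sub (by omega)]
        push_cast
        ring
      rw [show (k - 3 - 1 - i) + 3 = k - (i + 1) from by omega, ec]
      push_cast
      ring
    rw [Finset.sum_congr rfl hterm]
    · rw [Finset.sum_add_distrib,
        Finset.sum_range_reflect (fun j => (((j:ℕ):ℚ) + 1) * 2 ^ (j + 3)) (k - 3)]
      have hc3 : ((k - 3 : ℕ) : ℚ) = (k:ℚ) - 3 := by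
        rw [Nat.cast_sub (by omega)]; norm_num
      have hA : ∑ i ∈ Finset.range (k - 3), ((k:ℚ) - 3 - i) * 2 ^ (i + 2)
          = ((k:ℚ) - 3) * 4 * (2 ^ (k - 3) - 1)
            - 4 * ((((k - 3 : ℕ)):ℚ) - 2) * 2 ^ (k - 3) - 8 := by
        have h : ∀ i ∈ Finset.range (k - 3), ((k:ℚ) - 3 - (i:ℚ)) * 2 ^ (i + 2)
            = ((k:ℚ) - 3) * 4 * 2 ^ i - 4 * ((i:ℚ) * 2 ^ i) := fun i _ => by ring
        rw [Finset.sum_congr rfl h]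
        rw [Finset.sum_sub_distrib, ← Finset.mul_sum, ← Finset.mul_sum, g1, g2]
        ring
      have hB : ∑ i ∈ Finset.range (k - 3), (((i:ℕ):ℚ) + 1) * 2 ^ (i + 3)
          = 8 * ((((k - 3 : ℕ)):ℚ) - 2) * 2 ^ (k - 3) + 16 + 8 * (2 ^ (k - 3) - 1) := by
        have h : ∀ i ∈ Finset.range (k - 3), (((i:ℕ):ℚ) + 1) * 2 ^ (i + 3)
            = 8 * ((i:ℚ) * 2 ^ i) + 8 * 2 ^ i := fun i _ => by ring
        rw [Finset.sum_congr rfl h]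
        rw [Finset.sum_add_distrib, ← Finset.mul_sum, ← Finset.mul_sum, g1, g2]
        ring
      rw [hA, hB, hc3]
      have p1 : (2:ℚ) ^ k = 2 ^ (k - 3) * 8 := by
        have h : k - 3 + 3 = k := by omega
        conv_lhs => rw [← h]
        rw [pow_add]; norm_num
      have p2 : (2:ℚ) ^ (k + 1) = 2 ^ (k - 3) * 16 := by
        have h : k - 3 + 4 = k + 1 := by omega
        conv_lhs => rw [← h]
        rw [pow_add]; norm_num
      have p3 : (2:ℚ) ^ (k + 2) = 2 ^ (k - 3) * 32 := by
        have h : k - 3 + 5 = k + 2 := by omega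
        conv_lhs => rw [← h]
        rw [pow_add]; norm_num
      rw [p1, p2, p3]
      ring
  | succ n hn ih =>
    have hS : ((S k (n + 1) : ℚ)) = (S k n : ℚ) + (f k (n + 1) : ℚ) := by
      rw [S_succ]; push_cast; ring
    have hsplit1 : ∑ i ∈ Finset.range (k - 2),
          ((k:ℚ) - 2 - (i:ℚ)) * ((f k (i + 1) : ℚ) + (f k (n + 1 - i) : ℚ))
        = (∑ i ∈ Finset.range (k - 2), ((k:ℚ) - 2 - (i:ℚ)) * (f k (i + 1) : ℚ))
          + ∑ i ∈ Finset.range (k - 2), ((k:ℚ) - 2 - (i:ℚ)) * (f k (n + 1 - i) : ℚ) := by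
      rw [← Finset.sum_add_distrib]
      exact Finset.sum_congr rfl (fun i _ => by ring)
    have hsplit2 : ∑ i ∈ Finset.range (k - 2),
          ((k:ℚ) - 2 - (i:ℚ)) * ((f k (i + 1) : ℚ) + (f k (n - i) : ℚ))
        = (∑ i ∈ Finset.range (k - 2), ((k:ℚ) - 2 - (i:ℚ)) * (f k (i + 1) : ℚ))
          + ∑ i ∈ Finset.range (k - 2), ((k:ℚ) - 2 - (i:ℚ)) * (f k (n - i) : ℚ) := by
      rw [← Finset.sum_add_distrib]
      exact Finset.sum_congr rfl (fun i _ => by ring)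
    rw [show n + 1 + 2 = n + 3 from by omega, hS]
    linear_combination ih - step_id k n hk hn - hsplit1 + hsplit2


/-- For any `k ≥ 3`: `S^(k)(n) = 2^{n+1} - 1` for `0 ≤ n ≤ k-1`,
and `S^(k)(n) = (f_{n+2}^(k) - 2^k + 1 + ∑_{i=0}^{k-3} (k-2-i)(f_{i+1}^(k) + f_{n-i}^(k)))/(k-1) + f_0^(k)`
for `n ≥ k`. -/
theorem stmt_9 (k : ℕ) (hk : 3 ≤ k) :
    (∀ n ≤ k - 1, S k n = 2 ^ (n + 1) - 1) ∧
    (∀ n, k ≤ n →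
      (S k n : ℚ) =
        ((f k (n + 2) : ℚ) - 2 ^ k + 1 +
            ∑ i ∈ Finset.range (k - 2),
              ((k : ℚ) - 2 - (i : ℚ)) * ((f k (i + 1) : ℚ) + (f k (n - i) : ℚ))) /
          ((k : ℚ) - 1) + (f k 0 : ℚ)) := by
  constructor
  · intro n hn
    exact S_small k (by omega) n (by omega)
  · intro n hn
    have h1 : (1:ℚ) < (k:ℚ) := by exact_mod_cast (by omega : 1 < k)
    have hK : ((k:ℚ) - 1) ≠ 0 := sub_ne_zero.mpr (by linarith)
    have hkey := key k hk n hn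
    rw [f_lt k 0 (by omega)]
    field_simp
    linear_combination hkey
end

section
/- The set 𝒲 = ⋃_{k ≥ 3} 𝒱^(k) is a cross-fix-free code: every element of 𝒲 is bifix-free, and for any two distinct v, v' ∈ 𝒲, no nonempty prefix of v (including v itself) equals a suffix of v', and no nonempty prefix of v' equals a suffix of v. -/
/-!
Every word of `𝒲` has the shape `1^k m 0^k`, where `m` starts with `0`, ends with `1` and
contains no run of length `k` (`IsFramed k`). Let a nonempty `p` be a prefix of such a word `v`
and a suffix of such a word `v'` (with parameter `k'`). Since `p` ends with `0`, it is longer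
than `k` and so begins with `1^k 0`. In `v'` a run `1^k` followed by `0` is either the end of
the leading block `1^{k'}` or lies inside the middle factor, where runs are shorter than `k'`;
hence if `k' ≤ k` then `p` starts at the beginning of `v'`, so `p = v'` and `k = k'`. The map
`w ↦ reverse (map not w)` preserves the shape and exchanges prefixes and suffixes, which gives
the case `k ≤ k'` and the equality `p = v`.
-/

open List

section Words

variable {α : Type*} {a b : α}

theorem List.replicate_infix_of_infix_append_replicate {k j : ℕ} {l : List α}
    (hk : 0 < k) (hab : a ≠ b) (h : replicate k a <:+: l ++ replicate j b) :
    replicate k a <:+: l := by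
  induction j with
  | zero => simpa using h
  | succ j ih =>
    rw [replicate_succ', ← append_assoc, infix_concat_iff] at h
    rcases h with h | h
    · have hlast := h.getLast (by simp; omega)
      exact (hab (by simpa using hlast)).elim
    · exact ih (by simpa using h)

theorem List.replicate_append_cons_inj_left {i j : ℕ} {l l' : List α} (hab : a ≠ b)
    (h : replicate i a ++ b :: l = replicate j a ++ b :: l') : i = j := by
  induction i generalizing j with
  | zero =>
    cases j with
    | zero => rfl
    | succ j => exact absurd (cons.inj h).1.symm hab
  | succ i ih =>
    cases j with
    | zero => exact absurd (cons.inj h).1 hab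
    | succ j => exact congrArg _ (ih (cons.inj h).2)

end Words

def reverseComplement (v : List Bool) : List Bool := (v.map not).reverse

@[simp]
theorem reverseComplement_append (u v : List Bool) :
    reverseComplement (u ++ v) = reverseComplement v ++ reverseComplement u := by
  simp [reverseComplement]

@[simp]
theorem reverseComplement_replicate (n : ℕ) (b : Bool) :
    reverseComplement (replicate n b) = replicate n !b := by
  simp [reverseComplement]

@[simp]
theorem reverseComplement_reverseComplement (v : List Bool) :
    reverseComplement (reverseComplement v) = v := by
  simp [reverseComplement, Function.comp_def]

@[simp]
theorem reverseComplement_inj {u v : List Bool} :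
    reverseComplement u = reverseComplement v ↔ u = v :=
  ⟨fun h => by simpa using congrArg reverseComplement h, congrArg _⟩

@[simp]
theorem reverseComplement_eq_nil_iff {v : List Bool} : reverseComplement v = [] ↔ v = [] := by
  simp [reverseComplement]

theorem List.IsPrefix.reverseComplement {u v : List Bool} (h : u <+: v) :
    reverseComplement u <:+ reverseComplement v :=
  (h.map not).reverse

theorem List.IsSuffix.reverseComplement {u v : List Bool} (h : u <:+ v) :
    reverseComplement u <+: reverseComplement v :=
  (h.map not).reverse

theorem List.IsInfix.reverseComplement {u v : List Bool} (h : u <:+: v) :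
    reverseComplement u <:+: reverseComplement v :=
  (h.map not).reverse

def IsFramed (k : ℕ) (v : List Bool) : Prop :=
  ∃ m, v = replicate k true ++ m ++ replicate k false ∧ m.head? = some false ∧
    m.getLast? = some true ∧ ¬ replicate k false <:+: m ∧ ¬ replicate k true <:+: m

theorem isFramed_of_mem_VkSet {k : ℕ} {v : List Bool} (hv : v ∈ VkSet k) : IsFramed k v := by
  simp only [VkSet, Vnk, Set.mem_iUnion, Set.mem_ofPred_eq] at hv
  obtain ⟨n, hn, hlen, hpre, hsuf, hh, hl, hf, ht⟩ := hv
  refine ⟨(v.drop k).take (n - 2 * k), ?_, hh, hl, hf, ht⟩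
  have hdrop : (v.drop k).drop (n - 2 * k) = replicate k false := by
    rw [drop_drop, suffix_iff_eq_drop.1 hsuf, length_replicate]
    congr 1
    omega
  rw [prefix_iff_eq_take.1 hpre, length_replicate, append_assoc, ← hdrop, take_append_drop,
    take_append_drop]

namespace IsFramed

variable {k k' : ℕ} {p t v v' : List Bool}

theorem pos (hv : IsFramed k v) : 0 < k := by
  obtain ⟨m, -, -, -, -, hmt⟩ := hv
  exact Nat.pos_of_ne_zero fun hk => hmt (by simp [hk])

theorem reverseComplement (hv : IsFramed k v) : IsFramed k (reverseComplement v) := by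
  obtain ⟨m, rfl, hmh, hml, hmf, hmt⟩ := hv
  refine ⟨_root_.reverseComplement m, by simp [append_assoc], ?_, ?_, ?_, ?_⟩
  · simp [_root_.reverseComplement, hml]
  · simp [_root_.reverseComplement, hmh]
  · exact fun h => hmt (by simpa using h.reverseComplement)
  · exact fun h => hmf (by simpa using h.reverseComplement)

theorem eq_nil_of_append_replicate_append (hv : IsFramed k' v) (hkk : k' ≤ k) {q : List Bool}
    (h : t ++ (replicate k true ++ false :: q) = v) : t = [] ∧ k = k' := by
  have hk : 0 < k := hv.pos.trans_le hkk
  obtain ⟨m, rfl, hmh, -, -, hmt⟩ := hv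
  obtain ⟨m₀, rfl⟩ := head?_eq_some_iff.1 hmh
  rw [append_assoc, append_eq_append_iff] at h
  rcases h with ⟨a, hta, ha⟩ | ⟨c, rfl, hc⟩
  · obtain ⟨-, ha'⟩ := suffix_replicate_iff.1 ⟨t, hta.symm⟩
    rw [ha', cons_append] at ha
    have hka := replicate_append_cons_inj_left (by decide) ha
    have hlen := congrArg length hta
    simp only [length_replicate, length_append] at hlen
    exact ⟨length_eq_zero_iff.1 (by omega), by omega⟩
  · refine absurd ?_ hmt
    have hinf : replicate k true <:+: (false :: m₀) ++ replicate k' false :=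
      hc ▸ ⟨c, false :: q, by simp⟩
    have hk'k : replicate k' true <+: replicate k true :=
      prefix_replicate_iff.2 ⟨by simpa using hkk, by simp⟩
    exact hk'k.isInfix.trans (replicate_infix_of_infix_append_replicate hk (by decide) hinf)

theorem length_lt_of_prefix_of_suffix (hv : IsFramed k v) (hv' : IsFramed k' v') (hp : p ≠ [])
    (hpv : p <+: v) (hpv' : p <:+ v') : k < p.length := by
  by_contra! hle
  have hk' := hv'.pos
  have hp0 : p.length ≠ 0 := by simpa using hp
  obtain ⟨m, rfl, -⟩ := hv
  obtain ⟨m', hv'm, -⟩ := hv'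
  have hpk : p <+: replicate k true :=
    prefix_of_prefix_length_le hpv (by simp [append_assoc]) (by simpa using hle)
  obtain ⟨t, htp⟩ := hpv'
  have hlast := congrArg getLast? htp
  rw [(prefix_replicate_iff.1 hpk).2, hv'm] at hlast
  simp [getLast?_replicate, hp0, hk'.ne'] at hlast

theorem eq_of_prefix_of_suffix_of_le (hv : IsFramed k v) (hv' : IsFramed k' v') (hp : p ≠ [])
    (hpv : p <+: v) (hpv' : p <:+ v') (hkk : k' ≤ k) : k = k' ∧ p = v' := by
  have hlt := hv.length_lt_of_prefix_of_suffix hv' hp hpv hpv'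
  obtain ⟨m, rfl, hmh, -⟩ := hv
  obtain ⟨m₀, rfl⟩ := head?_eq_some_iff.1 hmh
  obtain ⟨q, rfl⟩ : replicate k true ++ [false] <+: p :=
    prefix_of_prefix_length_le (by simp [append_assoc]) hpv (by simpa using hlt)
  obtain ⟨t, rfl⟩ := hpv'
  obtain ⟨rfl, rfl⟩ := hv'.eq_nil_of_append_replicate_append hkk (t := t) (q := q) (by simp)
  exact ⟨rfl, rfl⟩

theorem eq_of_prefix_of_suffix (hv : IsFramed k v) (hv' : IsFramed k' v') (hp : p ≠ [])
    (hpv : p <+: v) (hpv' : p <:+ v') : p = v ∧ p = v' := by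
  have hle := hv.eq_of_prefix_of_suffix_of_le hv' hp hpv hpv'
  have hge : k ≤ k' → k' = k ∧ p = v := fun hkk => by
    simpa using hv'.reverseComplement.eq_of_prefix_of_suffix_of_le hv.reverseComplement
      (by simpa using hp) hpv'.reverseComplement hpv.reverseComplement hkk
  rcases le_total k' k with hkk | hkk
  · obtain ⟨rfl, hpv'⟩ := hle hkk
    exact ⟨(hge le_rfl).2, hpv'⟩
  · obtain ⟨rfl, hpv⟩ := hge hkk
    exact ⟨hpv, (hle le_rfl).2⟩

end IsFramed

theorem crossFixFree_of_forall_prefix_suffix {X : Set (List Bool)}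
    (h : ∀ v ∈ X, ∀ v' ∈ X, ∀ p : List Bool, p ≠ [] → p <+: v → p <:+ v' → p = v ∧ p = v') :
    CrossFixFree X :=
  ⟨fun v hv p hp hne hpv hpv' => hne (h v hv v hv p hp hpv hpv').1,
    fun v hv v' hv' hne p hp hpv hpv' =>
      hne ((h v hv v' hv' p hp hpv hpv').1.symm.trans (h v hv v' hv' p hp hpv hpv').2)⟩

/-- `𝒲 = ⋃_{k ≥ 3} 𝒱^(k)` is a cross-fix-free code. -/
theorem stmt_12 : CrossFixFree (⋃ k ∈ {k : ℕ | 3 ≤ k}, VkSet k) := by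
  refine crossFixFree_of_forall_prefix_suffix ?_
  simp only [Set.mem_iUnion]
  rintro v ⟨k, -, hv⟩ v' ⟨k', -, hv'⟩ p hp hpv hpv'
  exact (isFramed_of_mem_VkSet hv).eq_of_prefix_of_suffix (isFramed_of_mem_VkSet hv') hp hpv hpv'
end

section
/- The set 𝒟 is a cross-fix-free code: every element of 𝒟 is bifix-free, and for any two distinct v, v' ∈ 𝒟, no nonempty prefix of v (including v itself) equals a suffix of v', and no nonempty prefix of v' equals a suffix of v. -/

lemma dset_balance {v : List Bool} (hv : v ∈ Dset) : v.count true = v.count false := by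
  obtain ⟨α, hα, rfl⟩ := hv
  simp [List.count_cons, List.count_append, hα.1]

lemma dset_prefix {v p : List Bool} (hv : v ∈ Dset) (hp : p <+: v)
    (hne : p ≠ []) (hnv : p ≠ v) : p.count false < p.count true := by
  obtain ⟨α, hα, rfl⟩ := hv
  obtain ⟨b, q, rfl⟩ : ∃ b q, p = b :: q := by
    cases p with
    | nil => exact absurd rfl hne
    | cons b q => exact ⟨b, q, rfl⟩
  rw [List.cons_prefix_cons] at hp
  obtain ⟨rfl, hq⟩ := hp
  rcases List.prefix_concat_iff.mp hq with h | h
  · exact absurd (by rw [h]) hnv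
  · have := hα.2 q h
    simp [List.count_cons]
    omega

/-- `𝒟` is a cross-fix-free code. -/
theorem stmt_14 : CrossFixFree Dset := by
  constructor
  · intro v hv p hne hnv hpre hsuf
    obtain ⟨t, ht⟩ := hsuf
    have hbp := dset_prefix hv hpre hne hnv
    have htne : t ≠ [] := by rintro rfl; exact hnv (by simpa using ht)
    have htnv : t ≠ v := by
      intro h
      have hl := congrArg List.length ht
      rw [h] at hl
      simp at hl
      exact hne hl
    have hbt := dset_prefix hv ⟨p, ht⟩ htne htnv
    have hbal := dset_balance hv
    have h1 : v.count true = t.count true + p.count true := by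
      rw [← ht]; simp [List.count_append]
    have h2 : v.count false = t.count false + p.count false := by
      rw [← ht]; simp [List.count_append]
    omega
  · intro v hv v' hv' hne p hpne hpre hsuf
    obtain ⟨t, ht⟩ := hsuf
    have hbal' := dset_balance hv'
    have h1 : v'.count true = t.count true + p.count true := by
      rw [← ht]; simp [List.count_append]
    have h2 : v'.count false = t.count false + p.count false := by
      rw [← ht]; simp [List.count_append]
    by_cases hpv : p = v
    · subst hpv
      have hbp := dset_balance hv
      have htne : t ≠ [] := by rintro rfl; simp at ht; exact hne ht
      have htnv : t ≠ v' := by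
        intro h
        have hl := congrArg List.length ht
        rw [h] at hl
        simp at hl
        exact hpne hl
      have hbt := dset_prefix hv' ⟨p, ht⟩ htne htnv
      omega
    · have hbp := dset_prefix hv hpre hpne hpv
      by_cases hte : t = []
      · subst hte
        simp at ht
        subst ht
        omega
      · have htnv : t ≠ v' := by
          intro h
          have hl := congrArg List.length ht
          rw [h] at hl
          simp at hl
          exact hpne hl
        have hbt := dset_prefix hv' ⟨p, ht⟩ hte htnv
        omega
end

section
/- For any fixed n ≥ 2, the code 𝒟(n) is non-expandable: for every binary bifix-free string ψ of length at most n with ψ ∉ 𝒟(n), the set 𝒟(n) ∪ {ψ} is not a cross-fix-free code. -/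
/-!
Read `1` as an up-step and `0` as a down-step. Since `10 ∈ 𝒟(n)`, a cross-fix-free
extension `ψ` of `𝒟(n)` must begin with `1` and end with `0`. If `ψ` has at least as many
`0`s as `1`s, the path `ψ` returns to level `0` and its first return is a prefix of `ψ`
lying in `𝒟`; otherwise the same holds for the reversed complement of `ψ`, which gives a
suffix of `ψ` lying in `𝒟`. Either way a word of `𝒟(n)` other than `ψ` is a prefix or a
suffix of `ψ`.
-/

namespace BinaryString

def balance (w : List Bool) : ℤ := w.count true - w.count false

@[simp] lemma balance_nil : balance [] = 0 := by simp [balance]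

@[simp] lemma balance_cons (b : Bool) (w : List Bool) :
    balance (b :: w) = balance w + if b then 1 else -1 := by
  cases b <;> simp [balance] <;> ring

@[simp] lemma balance_append (u w : List Bool) : balance (u ++ w) = balance u + balance w := by
  simp only [balance, List.count_append]; push_cast; ring

def dual (w : List Bool) : List Bool := (w.map not).reverse

@[simp] lemma dual_nil : dual [] = [] := rfl

@[simp] lemma dual_cons (b : Bool) (w : List Bool) : dual (b :: w) = dual w ++ [!b] := by
  simp [dual]

@[simp] lemma dual_append (u w : List Bool) : dual (u ++ w) = dual w ++ dual u := by
  simp [dual]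

@[simp] lemma dual_dual (w : List Bool) : dual (dual w) = w := by
  simp [dual, List.map_reverse, Function.comp_def]

@[simp] lemma balance_dual (w : List Bool) : balance (dual w) = -balance w := by
  induction w with
  | nil => simp
  | cons b w ih => cases b <;> simp [ih] <;> ring

lemma dual_suffix_dual_of_prefix {u w : List Bool} (h : u <+: w) : dual u <:+ dual w :=
  List.reverse_suffix.2 (h.map not)

lemma isDyck_iff_balance {α : List Bool} :
    IsDyck α ↔ balance α = 0 ∧ ∀ p, p <+: α → 0 ≤ balance p := by
  simp only [IsDyck, balance, sub_eq_zero, sub_nonneg, Nat.cast_inj, Nat.cast_le]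

lemma isDyck_nil : IsDyck [] :=
  isDyck_iff_balance.2 ⟨balance_nil, fun p hp => by simp [List.prefix_nil.1 hp]⟩

lemma isDyck_dual {α : List Bool} (hα : IsDyck α) : IsDyck (dual α) := by
  rw [isDyck_iff_balance] at hα ⊢
  refine ⟨by simp [hα.1], fun p ⟨s, hs⟩ => ?_⟩
  have hsplit : α = dual s ++ dual p := by rw [← dual_dual α, ← hs, dual_append]
  have hs' := hα.2 (dual s) ⟨dual p, hsplit.symm⟩
  have hbal := hα.1
  rw [hsplit, balance_append] at hbal
  rw [← dual_dual p, balance_dual]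
  linarith

lemma dual_mem_Dset {v : List Bool} (hv : v ∈ Dset) : dual v ∈ Dset := by
  obtain ⟨α, hα, rfl⟩ := hv
  exact ⟨dual α, isDyck_dual hα, by simp⟩

/-- The first return to level `-1` of a path ending below level `0`. -/
lemma exists_isDyck_append_false_prefix {t : List Bool} (ht : balance t < 0) :
    ∃ α, IsDyck α ∧ α ++ [false] <+: t := by
  classical
  have hex : ∃ i, balance (t.take i) < 0 := ⟨t.length, by simpa using ht⟩
  have hi : balance (t.take (Nat.find hex)) < 0 := Nat.find_spec hex
  obtain ⟨j, hj⟩ : ∃ j, Nat.find hex = j + 1 :=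
    Nat.exists_eq_succ_of_ne_zero fun h => by simp [h] at hi
  have hprefix : ∀ p, p <+: t.take j → 0 ≤ balance p := by
    intro p hp
    have hlen : p.length ≤ j := hp.length_le.trans (List.length_take_le _ _)
    rw [List.prefix_iff_eq_take.1 (hp.trans (List.take_prefix j t))]
    exact not_lt.1 (Nat.find_min hex (by omega))
  have hjt : j < t.length := by
    by_contra h
    have := hprefix _ (List.prefix_refl _)
    rw [List.take_of_length_le (by omega)] at this
    omega
  have hstep : t.take (Nat.find hex) = t.take j ++ [t[j]] := by
    rw [hj, List.take_add_one, List.getElem?_eq_getElem hjt]; rfl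
  rw [hstep, balance_append] at hi
  have hnonneg := hprefix _ (List.prefix_refl _)
  have hlast : t[j] = false := by
    by_contra h
    simp [Bool.eq_true_of_not_eq_false h] at hi
    omega
  refine ⟨t.take j, isDyck_iff_balance.2 ⟨?_, hprefix⟩, ?_⟩
  · simp [hlast] at hi
    omega
  · rw [← hlast, ← hstep]
    exact List.take_prefix _ _

lemma exists_mem_Dset_prefix {t : List Bool} (ht : balance (true :: t) ≤ 0) :
    ∃ v ∈ Dset, v <+: true :: t := by
  obtain ⟨α, hα, hpre⟩ := exists_isDyck_append_false_prefix (t := t) (by simp at ht; linarith)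
  exact ⟨_, ⟨α, hα, rfl⟩, List.cons_prefix_cons.2 ⟨rfl, hpre⟩⟩

lemma exists_mem_Dset_suffix {t : List Bool} (ht : 0 ≤ balance (t ++ [false])) :
    ∃ v ∈ Dset, v <:+ t ++ [false] := by
  obtain ⟨v, hv, hpre⟩ := exists_mem_Dset_prefix (t := dual t) (by simp at ht ⊢; linarith)
  refine ⟨dual v, dual_mem_Dset hv, ?_⟩
  simpa using dual_suffix_dual_of_prefix hpre

lemma exists_mem_Dset_prefix_or_suffix (β : List Bool) :
    ∃ v ∈ Dset, v <+: true :: (β ++ [false]) ∨ v <:+ true :: (β ++ [false]) := by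
  rcases le_total (balance (true :: (β ++ [false]))) 0 with h | h
  · obtain ⟨v, hv, hpre⟩ := exists_mem_Dset_prefix h
    exact ⟨v, hv, .inl hpre⟩
  · rw [← List.cons_append] at h ⊢
    obtain ⟨v, hv, hsuf⟩ := exists_mem_Dset_suffix h
    exact ⟨v, hv, .inr hsuf⟩

end BinaryString

namespace CrossFixFree

variable {X : Set (List Bool)} {u v : List Bool}

lemma not_prefix (hX : CrossFixFree X) (hu : u ∈ X) (hv : v ∈ X) (hne : u ≠ v)
    (hu₀ : u ≠ []) : ¬ u <+: v :=
  fun h => hX.2 v hv u hu hne.symm u hu₀ h (List.suffix_refl u)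

lemma not_suffix (hX : CrossFixFree X) (hu : u ∈ X) (hv : v ∈ X) (hne : u ≠ v)
    (hu₀ : u ≠ []) : ¬ u <:+ v :=
  hX.2 u hu v hv hne u hu₀ (List.prefix_refl u)

lemma exists_eq_true_cons_append_false (hX : CrossFixFree X) (h10 : [true, false] ∈ X)
    (hv : v ∈ X) (hv₀ : v ≠ []) (hne : v ≠ [true, false]) : ∃ β, v = true :: (β ++ [false]) := by
  have h0 : ¬ [false] <+: v := fun h => hX.2 _ hv _ h10 hne [false] (by simp) h ⟨[true], rfl⟩
  have h1 : ¬ [true] <:+ v := hX.2 _ h10 _ hv (Ne.symm hne) [true] (by simp) (by simp)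
  obtain ⟨w, b, hwb⟩ := v.eq_nil_or_concat.resolve_left hv₀
  rw [List.concat_eq_append] at hwb
  subst hwb
  cases b
  · cases w with
    | nil => exact absurd (List.prefix_refl _) h0
    | cons a β =>
      cases a
      · exact absurd ⟨_, rfl⟩ h0
      · exact ⟨β, rfl⟩
  · exact absurd ⟨w, rfl⟩ h1

end CrossFixFree

open BinaryString in
/-- For any `n ≥ 2`, `𝒟(n)` is non-expandable: for every
(nonempty) binary bifix-free string `ψ` of length at most `n` with
`ψ ∉ 𝒟(n)`, the set `𝒟(n) ∪ {ψ}` is not a cross-fix-free code. -/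
theorem stmt_16 (n : ℕ) (hn : 2 ≤ n) :
    ∀ ψ : List Bool, ψ ≠ [] → BifixFree ψ → ψ.length ≤ n → ψ ∉ DLe n →
      ¬ CrossFixFree (DLe n ∪ {ψ}) := by
  intro ψ hψ₀ _ hlen hψD hX
  have h10 : [true, false] ∈ Dset := ⟨[], isDyck_nil, rfl⟩
  have hψ : ψ ∈ DLe n ∪ {ψ} := Or.inr rfl
  have hψD' : ψ ∉ Dset := fun h => hψD ⟨h, hlen⟩
  obtain ⟨β, hβ⟩ := hX.exists_eq_true_cons_append_false (Or.inl ⟨h10, hn⟩) hψ hψ₀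
    (by rintro rfl; exact hψD' h10)
  obtain ⟨v, hvD, hfix⟩ := exists_mem_Dset_prefix_or_suffix β
  rw [← hβ] at hfix
  have hne : v ≠ ψ := by rintro rfl; exact hψD' hvD
  have hv₀ : v ≠ [] := by obtain ⟨α, -, rfl⟩ := hvD; simp
  have hv : v ∈ DLe n ∪ {ψ} :=
    Or.inl ⟨hvD, (hfix.elim List.IsPrefix.length_le List.IsSuffix.length_le).trans hlen⟩
  rcases hfix with hpre | hsuf
  · exact hX.not_prefix hv hψ hne hv₀ hpre
  · exact hX.not_suffix hv hψ hne hv₀ hsuf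
end

section
/- For any fixed k ≥ 3 and n ≥ 2k+2, the code 𝒱^(k)(n) is expandable: the string w = 11(01)^{⌊(n−4)/2⌋}00 (of length at most n) does not belong to 𝒱^(k)(n), every element of 𝒱^(k)(n) ∪ {w} is bifix-free, for any two distinct elements of 𝒱^(k)(n) ∪ {w} no nonempty prefix of one equals a suffix of the other, and no element of 𝒱^(k)(n) ∪ {w} is a factor of a distinct element. -/
/-!
A word of `𝒱^(k)` has the form `1^k M 0^k`, where `M` begins with 0, ends with 1 and contains no
run of length `k`; hence its run `1^k` occurs only as a prefix and its run `0^k` only as a suffix.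
A nonempty prefix `p` of one such word that is a suffix of another one `v'` ends with 0, so it is
longer than a block of ones and begins with `1^k`, which forces `p = v'`; then `v'` is a prefix of
the first word and ends with its only `0^k`, so the two words coincide. Factors are handled alike.

The word `w = 11(01)^m 00` contains neither `111` nor `000`, and contains `11` only as a prefix and
`00` only as a suffix. For `k ≥ 3` any overlap of `w` with a word of `𝒱^(k)` would put `1^k` or
`0^k` inside `w`.
-/

open List

section Occurrence

variable {α : Type*}

def OccursOnlyAsPrefix (u l : List α) : Prop := ∀ s t, l = s ++ u ++ t → s = []

def OccursOnlyAsSuffix (u l : List α) : Prop := ∀ s t, l = s ++ u ++ t → t = []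

theorem OccursOnlyAsPrefix.of_reverse {u l : List α}
    (h : OccursOnlyAsPrefix u.reverse l.reverse) : OccursOnlyAsSuffix u l := by
  intro s t hl
  simpa using h t.reverse s.reverse (by simp [hl])

theorem OccursOnlyAsPrefix.eq_of_suffix {u p l : List α} (h : OccursOnlyAsPrefix u l)
    (hu : u <+: p) (hp : p <:+ l) : p = l := by
  obtain ⟨t, rfl⟩ := hu
  obtain ⟨s, rfl⟩ := hp
  simp [h s t (by simp)]

theorem OccursOnlyAsPrefix.prefix_of_infix {u p l : List α} (h : OccursOnlyAsPrefix u l)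
    (hu : u <+: p) (hp : p <:+: l) : p <+: l := by
  obtain ⟨t, rfl⟩ := hu
  obtain ⟨s, r, rfl⟩ := hp
  simp [h s (t ++ r) (by simp)]

theorem OccursOnlyAsSuffix.eq_of_prefix {u p l : List α} (h : OccursOnlyAsSuffix u l)
    (hu : u <:+ p) (hp : p <+: l) : p = l := by
  obtain ⟨s, rfl⟩ := hu
  obtain ⟨t, rfl⟩ := hp
  simp [h s t (by simp)]

theorem replicate_infix_append {a : α} {k : ℕ} {xs ys : List α}
    (h : replicate k a <:+: xs ++ ys) (hys : ys.head? ≠ some a) :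
    replicate k a <:+: xs ∨ replicate k a <:+: ys := by
  rcases infix_append_iff.mp h with h | h | ⟨l₁, l₂, hl, hl₁, hl₂⟩
  · exact .inl h
  · exact .inr h
  · rcases l₂ with _ | ⟨b, l₂⟩
    · exact .inl (by simpa [hl] using hl₁.isInfix)
    · obtain ⟨t, rfl⟩ := hl₂
      have hb : b ∈ replicate k a := by simp [hl]
      simp [eq_of_mem_replicate hb] at hys

/-- Any other occurrence of the run would have to straddle a letter `b ≠ a` or lie inside `M`. -/
theorem occursOnlyAsPrefix_replicate_append {a b : α} {k j : ℕ} {M : List α} (hab : a ≠ b)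
    (hM : M.head? = some b) (hMa : ¬ replicate k a <:+: M) :
    OccursOnlyAsPrefix (replicate k a) (replicate k a ++ M ++ replicate j b) := by
  rintro (_ | ⟨c, s⟩) t h
  · rfl
  exfalso
  obtain ⟨k, rfl⟩ : ∃ k', k = k' + 1 :=
    Nat.exists_eq_succ_of_ne_zero (by rintro rfl; exact hMa nil_infix)
  have htail : replicate (k + 1) a <:+: replicate k a ++ (M ++ replicate j b) :=
    ⟨s, t, by simpa [replicate_succ] using (congrArg tail h).symm⟩
  rcases replicate_infix_append htail (by simp [head?_append, hM, hab.symm]) with h | h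
  · simpa using h.length_le
  rcases replicate_infix_append h (by rw [head?_replicate]; split <;> simp [hab.symm]) with h | h
  · exact hMa h
  · exact hab (eq_of_mem_replicate (h.subset (mem_replicate.2 ⟨by omega, rfl⟩)))

theorem occursOnlyAsSuffix_replicate_append {a b : α} {k j : ℕ} {M : List α} (hab : a ≠ b)
    (hM : M.getLast? = some a) (hMb : ¬ replicate j b <:+: M) :
    OccursOnlyAsSuffix (replicate j b) (replicate k a ++ M ++ replicate j b) := by
  apply OccursOnlyAsPrefix.of_reverse
  simpa using occursOnlyAsPrefix_replicate_append (j := k) (M := M.reverse) hab.symm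
    (by simpa using hM) (by rwa [← reverse_infix, reverse_replicate, reverse_reverse])

theorem replicate_prefix_of_prefix_of_suffix {a : α} {k : ℕ} {p v v' : List α}
    (hv : replicate k a <+: v) (hv' : v'.getLast? ≠ some a) (hp : p ≠ []) (hpv : p <+: v)
    (hpv' : p <:+ v') : replicate k a <+: p := by
  refine (prefix_or_prefix_of_prefix hpv hv).resolve_left fun h => hv' ?_
  obtain ⟨s, rfl⟩ := hpv'
  rw [getLast?_append_of_ne_nil _ hp, (prefix_replicate_iff.1 h).2, getLast?_replicate,
    if_neg (by simpa using hp)]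

theorem replicate_suffix_of_prefix_of_suffix {a : α} {k : ℕ} {p v v' : List α}
    (hv' : replicate k a <:+ v') (hv : v.head? ≠ some a) (hp : p ≠ []) (hpv : p <+: v)
    (hpv' : p <:+ v') : replicate k a <:+ p := by
  rw [← reverse_prefix, reverse_replicate]
  exact replicate_prefix_of_prefix_of_suffix (v := v'.reverse) (v' := v.reverse)
    (p := p.reverse) (k := k) (a := a) (by rwa [← reverse_replicate, reverse_prefix])
    (by simpa using hv) (by simpa using hp)
    (by simpa using hpv') (by simpa using hpv)

end Occurrence

theorem StrongCrossFixFree.mono {X Y : Set (List Bool)} (h : StrongCrossFixFree Y)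
    (hXY : X ⊆ Y) : StrongCrossFixFree X :=
  ⟨⟨fun v hv => h.1.1 v (hXY hv), fun v hv v' hv' => h.1.2 v (hXY hv) v' (hXY hv')⟩,
    fun v hv v' hv' => h.2 v (hXY hv) v' (hXY hv')⟩

theorem StrongCrossFixFree.union_singleton {X : Set (List Bool)} {w : List Bool}
    (hX : StrongCrossFixFree X) (hw : BifixFree w)
    (hXw : ∀ v ∈ X, ∀ p, p ≠ [] → p <+: v → ¬ p <:+ w)
    (hwX : ∀ v ∈ X, ∀ p, p ≠ [] → p <+: w → ¬ p <:+ v)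
    (hXw_infix : ∀ v ∈ X, ¬ v <:+: w) (hwX_infix : ∀ v ∈ X, ¬ w <:+: v) :
    StrongCrossFixFree (X ∪ {w}) := by
  obtain ⟨⟨hbifix, hcross⟩, hinfix⟩ := hX
  refine ⟨⟨?_, ?_⟩, ?_⟩
  · rintro v (hv | rfl)
    exacts [hbifix v hv, hw]
  · rintro v (hv | rfl) v' (hv' | rfl) hne
    exacts [hcross v hv v' hv' hne, hXw v hv, hwX v' hv', absurd rfl hne]
  · rintro v (hv | rfl) v' (hv' | rfl) hne
    exacts [hinfix v hv v' hv' hne, hXw_infix v hv, hwX_infix v' hv', absurd rfl hne]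

section VkSet

variable {k : ℕ} {v v' p : List Bool}

theorem pos_of_mem_Rset {ℓ : ℕ} {M : List Bool} (hM : M ∈ Rset k ℓ) : 0 < k :=
  Nat.pos_of_ne_zero fun hk => hM.2.2.2.1 (by simp [hk])

theorem exists_mem_Rset_of_mem_Vnk {n : ℕ} (hn : 2 * k ≤ n) (hv : v ∈ Vnk n k) :
    ∃ M ∈ Rset k (n - 2 * k), v = replicate k true ++ M ++ replicate k false := by
  obtain ⟨hlen, ⟨x, rfl⟩, hsuf, hhead, hlast, hfalse, htrue⟩ := hv
  have hxlen : x.length = n - k := by simp at hlen; omega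
  obtain ⟨y, rfl⟩ : replicate k false <:+ x :=
    suffix_of_suffix_length_le hsuf (suffix_append _ _) (by simp; omega)
  have hylen : y.length = n - 2 * k := by simp at hxlen; omega
  simp only [drop_left', length_replicate, take_left' hylen] at hhead hlast hfalse htrue
  exact ⟨y, ⟨hylen, hhead, hlast, hfalse, htrue⟩, by simp⟩

theorem exists_mem_Rset_of_mem_VkSet (hv : v ∈ VkSet k) :
    ∃ ℓ, ∃ M ∈ Rset k ℓ, v = replicate k true ++ M ++ replicate k false := by
  obtain ⟨n, hn, hv⟩ := Set.mem_iUnion₂.1 hv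
  exact ⟨_, exists_mem_Rset_of_mem_Vnk (by simp at hn; omega) hv⟩

theorem replicate_prefix_of_mem_VkSet (hv : v ∈ VkSet k) : replicate k true <+: v := by
  obtain ⟨_, M, -, rfl⟩ := exists_mem_Rset_of_mem_VkSet hv
  simp

theorem replicate_suffix_of_mem_VkSet (hv : v ∈ VkSet k) : replicate k false <:+ v := by
  obtain ⟨_, M, -, rfl⟩ := exists_mem_Rset_of_mem_VkSet hv
  exact suffix_append _ _

theorem getLast?_of_mem_VkSet (hv : v ∈ VkSet k) : v.getLast? = some false := by
  obtain ⟨_, M, hM, rfl⟩ := exists_mem_Rset_of_mem_VkSet hv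
  rw [getLast?_append_of_ne_nil _ (by simpa using (pos_of_mem_Rset hM).ne'), getLast?_replicate,
    if_neg (pos_of_mem_Rset hM).ne']

theorem occursOnlyAsPrefix_of_mem_VkSet (hv : v ∈ VkSet k) :
    OccursOnlyAsPrefix (replicate k true) v := by
  obtain ⟨_, M, hM, rfl⟩ := exists_mem_Rset_of_mem_VkSet hv
  exact occursOnlyAsPrefix_replicate_append (by decide) hM.2.1 hM.2.2.2.2

theorem occursOnlyAsSuffix_of_mem_VkSet (hv : v ∈ VkSet k) :
    OccursOnlyAsSuffix (replicate k false) v := by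
  obtain ⟨_, M, hM, rfl⟩ := exists_mem_Rset_of_mem_VkSet hv
  exact occursOnlyAsSuffix_replicate_append (by decide) hM.2.2.1 hM.2.2.2.1

theorem eq_of_prefix_of_mem_VkSet (hv : v ∈ VkSet k) (hv' : v' ∈ VkSet k) (h : v <+: v') :
    v = v' :=
  (occursOnlyAsSuffix_of_mem_VkSet hv').eq_of_prefix (replicate_suffix_of_mem_VkSet hv) h

theorem eq_of_prefix_of_suffix_of_mem_VkSet (hv : v ∈ VkSet k) (hv' : v' ∈ VkSet k)
    (hp : p ≠ []) (hpv : p <+: v) (hpv' : p <:+ v') : p = v' :=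
  (occursOnlyAsPrefix_of_mem_VkSet hv').eq_of_suffix
    (replicate_prefix_of_prefix_of_suffix (replicate_prefix_of_mem_VkSet hv)
      (by simp [getLast?_of_mem_VkSet hv']) hp hpv hpv') hpv'

theorem eq_of_infix_of_mem_VkSet (hv : v ∈ VkSet k) (hv' : v' ∈ VkSet k) (h : v <:+: v') :
    v = v' :=
  eq_of_prefix_of_mem_VkSet hv hv' <|
    (occursOnlyAsPrefix_of_mem_VkSet hv').prefix_of_infix (replicate_prefix_of_mem_VkSet hv) h

theorem strongCrossFixFree_VkSet : StrongCrossFixFree (VkSet k) := by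
  refine ⟨⟨fun v hv p hp hpv hpre hsuf =>
      hpv (eq_of_prefix_of_suffix_of_mem_VkSet hv hv hp hpre hsuf),
    fun v hv v' hv' hne p hp hpre hsuf => hne ?_⟩,
    fun v hv v' hv' hne h => hne (eq_of_infix_of_mem_VkSet hv hv' h)⟩
  obtain rfl := eq_of_prefix_of_suffix_of_mem_VkSet hv hv' hp hpre hsuf
  exact (eq_of_prefix_of_mem_VkSet hv' hv hpre).symm

end VkSet

section ExpansionWord

def alternatingWord (m : ℕ) : List Bool := (replicate m [false, true]).flatten

def expansionWord (m : ℕ) : List Bool := [true, true] ++ alternatingWord m ++ [false, false]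

theorem alternatingWord_succ (m : ℕ) :
    alternatingWord (m + 1) = false :: true :: alternatingWord m := by
  simp [alternatingWord, replicate_succ]

theorem alternatingWord_succ' (m : ℕ) :
    alternatingWord (m + 1) = alternatingWord m ++ [false, true] := by
  simp [alternatingWord, replicate_succ']

theorem isChain_true_cons_alternatingWord (m : ℕ) :
    IsChain (· ≠ ·) (true :: alternatingWord m) := by
  induction m with
  | zero => simp [alternatingWord]
  | succ m ih =>
    rw [alternatingWord_succ]
    exact isChain_cons_cons.2 ⟨by decide, isChain_cons_cons.2 ⟨by decide, ih⟩⟩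

theorem not_replicate_two_infix_alternatingWord (m : ℕ) (a : Bool) :
    ¬ replicate 2 a <:+: alternatingWord m :=
  fun h => by simpa using ((isChain_true_cons_alternatingWord m).tail.infix h)

theorem length_expansionWord (m : ℕ) : (expansionWord m).length = 2 * m + 4 := by
  induction m with
  | zero => rfl
  | succ m ih => simp_all [expansionWord, alternatingWord_succ]; omega

theorem head?_expansionWord (m : ℕ) : (expansionWord m).head? = some true := rfl

theorem getLast?_expansionWord (m : ℕ) : (expansionWord m).getLast? = some false := by
  rw [expansionWord, getLast?_append_of_ne_nil _ (by simp)]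
  rfl

variable {m : ℕ}

theorem occursOnlyAsPrefix_expansionWord (hm : 1 ≤ m) :
    OccursOnlyAsPrefix (replicate 2 true) (expansionWord m) := by
  obtain ⟨m, rfl⟩ := Nat.exists_eq_add_of_le' hm
  exact occursOnlyAsPrefix_replicate_append (j := 2) (by decide) (by simp [alternatingWord_succ])
    (not_replicate_two_infix_alternatingWord _ _)

theorem occursOnlyAsSuffix_expansionWord (hm : 1 ≤ m) :
    OccursOnlyAsSuffix (replicate 2 false) (expansionWord m) := by
  obtain ⟨m, rfl⟩ := Nat.exists_eq_add_of_le' hm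
  exact occursOnlyAsSuffix_replicate_append (k := 2) (by decide) (by simp [alternatingWord_succ'])
    (not_replicate_two_infix_alternatingWord _ _)

theorem not_replicate_three_true_infix_expansionWord (hm : 1 ≤ m) :
    ¬ replicate 3 true <:+: expansionWord m := by
  rintro ⟨s, t, h⟩
  obtain rfl := occursOnlyAsPrefix_expansionWord hm s (true :: t) (by simp [← h])
  obtain ⟨m, rfl⟩ := Nat.exists_eq_add_of_le' hm
  simp [expansionWord, alternatingWord_succ] at h

theorem not_replicate_three_false_infix_expansionWord (hm : 1 ≤ m) :
    ¬ replicate 3 false <:+: expansionWord m := by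
  rintro ⟨s, t, h⟩
  obtain rfl := occursOnlyAsSuffix_expansionWord hm (s ++ [false]) t (by simp [← h])
  obtain ⟨m, rfl⟩ := Nat.exists_eq_add_of_le' hm
  have := congrArg reverse h
  simp [expansionWord, alternatingWord_succ'] at this

end ExpansionWord

section ExpansionWordVersusVkSet

variable {k m : ℕ} {v p : List Bool}

theorem not_replicate_true_infix_expansionWord (hk : 3 ≤ k) (hm : 1 ≤ m) :
    ¬ replicate k true <:+: expansionWord m := fun h =>
  not_replicate_three_true_infix_expansionWord hm
    ((prefix_replicate_iff.2 ⟨by simpa using hk, by simp⟩).isInfix.trans h)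

theorem not_replicate_false_infix_expansionWord (hk : 3 ≤ k) (hm : 1 ≤ m) :
    ¬ replicate k false <:+: expansionWord m := fun h =>
  not_replicate_three_false_infix_expansionWord hm
    ((prefix_replicate_iff.2 ⟨by simpa using hk, by simp⟩).isInfix.trans h)

theorem expansionWord_ne_nil : expansionWord m ≠ [] := by simp [expansionWord]

theorem bifixFree_expansionWord (hm : 1 ≤ m) : BifixFree (expansionWord m) :=
  fun p hp hpw hpre hsuf => hpw <| (occursOnlyAsPrefix_expansionWord hm).eq_of_suffix
    (replicate_prefix_of_prefix_of_suffix
      ⟨alternatingWord m ++ [false, false], by simp [expansionWord]⟩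
      (by simp [getLast?_expansionWord]) hp hpre hsuf) hsuf

theorem expansionWord_not_mem_VkSet (hk : 3 ≤ k) (hm : 1 ≤ m) : expansionWord m ∉ VkSet k :=
  fun h => not_replicate_true_infix_expansionWord hk hm (replicate_prefix_of_mem_VkSet h).isInfix

theorem not_suffix_expansionWord_of_prefix_of_mem_VkSet (hk : 3 ≤ k) (hm : 1 ≤ m)
    (hv : v ∈ VkSet k) (hp : p ≠ []) (hpv : p <+: v) : ¬ p <:+ expansionWord m := fun h =>
  not_replicate_true_infix_expansionWord hk hm <|
    (replicate_prefix_of_prefix_of_suffix (replicate_prefix_of_mem_VkSet hv)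
      (by simp [getLast?_expansionWord]) hp hpv h).isInfix.trans h.isInfix

theorem not_suffix_of_prefix_expansionWord_of_mem_VkSet (hk : 3 ≤ k) (hm : 1 ≤ m)
    (hv : v ∈ VkSet k) (hp : p ≠ []) (hpw : p <+: expansionWord m) : ¬ p <:+ v := fun h =>
  not_replicate_false_infix_expansionWord hk hm <|
    (replicate_suffix_of_prefix_of_suffix (replicate_suffix_of_mem_VkSet hv)
      (by simp [head?_expansionWord]) hp hpw h).isInfix.trans hpw.isInfix

theorem not_infix_expansionWord_of_mem_VkSet (hk : 3 ≤ k) (hm : 1 ≤ m) (hv : v ∈ VkSet k) :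
    ¬ v <:+: expansionWord m := fun h =>
  not_replicate_true_infix_expansionWord hk hm
    ((replicate_prefix_of_mem_VkSet hv).isInfix.trans h)

/-- An occurrence of `expansionWord m` in a word at most one letter longer is a prefix or a
suffix of it, hence would start with `k` ones or end with `k` zeros. -/
theorem expansionWord_not_infix_of_mem_VkSet (hk : 3 ≤ k) (hm : 1 ≤ m) (hv : v ∈ VkSet k)
    (hlen : v.length ≤ 2 * m + 5) : ¬ expansionWord m <:+: v := by
  rintro ⟨s, t, rfl⟩
  simp only [length_append, length_expansionWord] at hlen
  rcases s with _ | ⟨a, s⟩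
  · exact not_replicate_true_infix_expansionWord hk hm <| IsPrefix.isInfix <|
      replicate_prefix_of_prefix_of_suffix (replicate_prefix_of_mem_VkSet hv)
        (by simp [getLast?_expansionWord]) expansionWord_ne_nil (by simp) (suffix_refl _)
  · obtain rfl : t = [] := length_eq_zero_iff.1 (by simp at hlen; omega)
    exact not_replicate_false_infix_expansionWord hk hm <| IsSuffix.isInfix <|
      replicate_suffix_of_prefix_of_suffix (replicate_suffix_of_mem_VkSet hv)
        (by simp [head?_expansionWord]) expansionWord_ne_nil (prefix_refl _) (by simp)

end ExpansionWordVersusVkSet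

/-- For any `k ≥ 3` and `n ≥ 2k+2`, the code `𝒱^(k)(n)` is
expandable: the string `w = 11(01)^{⌊(n-4)/2⌋}00` has length at most `n`, does
not belong to `𝒱^(k)(n)`, and `𝒱^(k)(n) ∪ {w}` is a strong cross-fix-free code
(all elements bifix-free, no nonempty prefix of one element is a suffix of a
distinct element, and no element is a factor of a distinct element). -/
theorem stmt_17 (k n : ℕ) (hk : 3 ≤ k) (hn : 2 * k + 2 ≤ n) :
    ([true, true] ++ (List.replicate ((n - 4) / 2) [false, true]).flatten ++
        [false, false]).length ≤ n ∧
    ([true, true] ++ (List.replicate ((n - 4) / 2) [false, true]).flatten ++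
        [false, false]) ∉ VkLe k n ∧
    StrongCrossFixFree (VkLe k n ∪
      {[true, true] ++ (List.replicate ((n - 4) / 2) [false, true]).flatten ++
        [false, false]}) := by
  change (expansionWord ((n - 4) / 2)).length ≤ n ∧ expansionWord ((n - 4) / 2) ∉ VkLe k n ∧
    StrongCrossFixFree (VkLe k n ∪ {expansionWord ((n - 4) / 2)})
  have hm : 1 ≤ (n - 4) / 2 := by omega
  have hlen := length_expansionWord ((n - 4) / 2)
  refine ⟨by omega, fun h => expansionWord_not_mem_VkSet hk hm h.1, ?_⟩
  refine (strongCrossFixFree_VkSet.mono fun v hv => hv.1).union_singleton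
    (bifixFree_expansionWord hm) ?_ ?_ ?_ ?_
  · exact fun v hv p => not_suffix_expansionWord_of_prefix_of_mem_VkSet hk hm hv.1
  · exact fun v hv p => not_suffix_of_prefix_expansionWord_of_mem_VkSet hk hm hv.1
  · exact fun v hv => not_infix_expansionWord_of_mem_VkSet hk hm hv.1
  · exact fun v hv => expansionWord_not_infix_of_mem_VkSet hk hm hv.1 (by have := hv.2; omega)
end
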